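/- arXiv:gr-qc/0611010 — 4 statements merged into one kernel-verified Lean document; each statement's English description precedes it below -/
import Mathlib

section
/- Suppose K_ij and f_kij are smooth time-dependent tensor fields on ℝ³ (symmetric in i,j) satisfying ∂_t K_ij = −∂^k f_kij − ∂_i ∂_j α and ∂_t f_kij = −∂_k K_ij + L_kij, with α and β_i smooth and L_kij := ∂_k ∂_(i β_j) − ∂^l ∂_[l β_i] δ_jk − ∂^l ∂_[l β_j] δ_ik. Then the momentum constraint function C_j := ∂^l K_lj − ∂_j K_l^l satisfies the homogeneous wave equation ∂_t² C_j = ∂^k ∂_k C_j. -/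
open scoped BigOperators

/-- Partial derivative in the `i`-th spatial coordinate direction on `ℝ³`. -/
noncomputable def pd (i : Fin 3) (u : (Fin 3 → ℝ) → ℝ) : (Fin 3 → ℝ) → ℝ :=
  fun x => fderiv ℝ u x (Pi.single i 1)

/-- Time derivative of a time-dependent field. -/
noncomputable def dt (u : ℝ → (Fin 3 → ℝ) → ℝ) (t : ℝ) (x : Fin 3 → ℝ) : ℝ :=
  deriv (fun s => u s x) t

/-- A time-dependent field, jointly smooth in `(t,x)`. -/
def SmoothT (u : ℝ → (Fin 3 → ℝ) → ℝ) : Prop :=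
  ContDiff ℝ (⊤ : ℕ∞) fun p : ℝ × (Fin 3 → ℝ) => u p.1 p.2

/-- Kronecker delta. -/
def kd (i j : Fin 3) : ℝ := if i = j then 1 else 0

/-- `L_kij := ∂_k ∂_(i β_j) − ∂^l ∂_[l β_i] δ_jk − ∂^l ∂_[l β_j] δ_ik`. -/
noncomputable def Lsh (β : Fin 3 → ℝ → (Fin 3 → ℝ) → ℝ) (k i j : Fin 3) (t : ℝ)
    (x : Fin 3 → ℝ) : ℝ :=
  (1 / 2) * (pd k (pd i (β j t)) x + pd k (pd j (β i t)) x)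
  - ((1 / 2) * ∑ l, (pd l (pd l (β i t)) x - pd l (pd i (β l t)) x)) * kd j k
  - ((1 / 2) * ∑ l, (pd l (pd l (β j t)) x - pd l (pd j (β l t)) x)) * kd i k

/-- Momentum constraint function `C_j = ∂^l K_lj − ∂_j K_l^l`. -/
noncomputable def Cmom (K : Fin 3 → Fin 3 → ℝ → (Fin 3 → ℝ) → ℝ) (j : Fin 3) (t : ℝ) :
    (Fin 3 → ℝ) → ℝ :=
  fun x => (∑ l, pd l (K l j t) x) - pd j (fun y => ∑ l, K l l t y) x

abbrev E3 := ℝ × (Fin 3 → ℝ)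

noncomputable def DD (v : E3) (F : E3 → ℝ) : E3 → ℝ := fun p => fderiv ℝ F p v

def unc (u : ℝ → (Fin 3 → ℝ) → ℝ) : E3 → ℝ := fun p => u p.1 p.2

def ee (i : Fin 3) : E3 := ((0 : ℝ), Pi.single i 1)

def tauv : E3 := ((1 : ℝ), (0 : Fin 3 → ℝ))

lemma DD_smooth {F : E3 → ℝ} (hF : ContDiff ℝ (⊤ : ℕ∞) F) (v : E3) : ContDiff ℝ (⊤ : ℕ∞) (DD v F) :=
  (hF.fderiv_right (by simp)).clm_apply contDiff_const

lemma DD_diff {F : E3 → ℝ} (hF : ContDiff ℝ (⊤ : ℕ∞) F) (v : E3) : Differentiable ℝ (DD v F) :=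
  (DD_smooth hF v).differentiable (by simp)

lemma DD_swap {F : E3 → ℝ} (hF : ContDiff ℝ (⊤ : ℕ∞) F) (v w : E3) :
    DD v (DD w F) = DD w (DD v F) := by
  funext p
  have hd : Differentiable ℝ (fderiv ℝ F) := (hF.fderiv_right (m := 1) (WithTop.coe_le_coe.mpr le_top)).differentiable one_ne_zero
  have h1 : ∀ y, HasFDerivAt F (fderiv ℝ F y) y := fun y => (hF.differentiable (by simp) y).hasFDerivAt
  have h2 : HasFDerivAt (fderiv ℝ F) (fderiv ℝ (fderiv ℝ F) p) p := (hd p).hasFDerivAt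
  have hsymm := second_derivative_symmetric h1 h2
  have comp : ∀ u : E3, fderiv ℝ (DD u F) p
      = (ContinuousLinearMap.apply ℝ ℝ u).comp (fderiv ℝ (fderiv ℝ F) p) := by
    intro u
    have : DD u F = fun q => (ContinuousLinearMap.apply ℝ ℝ u) (fderiv ℝ F q) := rfl
    rw [this, fderiv_comp' p (ContinuousLinearMap.differentiableAt _) (hd p)]
    simp
  show fderiv ℝ (DD w F) p v = fderiv ℝ (DD v F) p w
  rw [comp, comp]
  exact hsymm v w

lemma pd_slice {F : E3 → ℝ} (hF : Differentiable ℝ F) (i : Fin 3) (t : ℝ) (x : Fin 3 → ℝ) :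
    pd i (fun y => F (t, y)) x = DD (ee i) F (t, x) := by
  have hins : HasFDerivAt (fun y : Fin 3 → ℝ => ((t, y) : E3))
      (ContinuousLinearMap.inr ℝ ℝ (Fin 3 → ℝ)) x :=
    (HasFDerivAt.prodMk (hasFDerivAt_const t x) (hasFDerivAt_id x))
  have hc : HasFDerivAt (fun y : Fin 3 → ℝ => F (t, y))
      ((fderiv ℝ F (t, x)).comp (ContinuousLinearMap.inr ℝ ℝ (Fin 3 → ℝ))) x :=
    (hF (t, x)).hasFDerivAt.comp x hins
  simp only [pd, hc.fderiv]
  rfl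

lemma deriv_slice {F : E3 → ℝ} (hF : Differentiable ℝ F) (t : ℝ) (x : Fin 3 → ℝ) :
    deriv (fun s => F (s, x)) t = DD tauv F (t, x) := by
  have hins : HasFDerivAt (fun s : ℝ => ((s, x) : E3))
      (ContinuousLinearMap.inl ℝ ℝ (Fin 3 → ℝ)) t :=
    (HasFDerivAt.prodMk (hasFDerivAt_id t) (hasFDerivAt_const x t))
  have hc : HasFDerivAt (fun s : ℝ => F (s, x))
      ((fderiv ℝ F (t, x)).comp (ContinuousLinearMap.inl ℝ ℝ (Fin 3 → ℝ))) t :=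
    (hF (t, x)).hasFDerivAt.comp t hins
  rw [hc.hasDerivAt.deriv]
  rfl

lemma pd1 {F : E3 → ℝ} (hF : ContDiff ℝ (⊤ : ℕ∞) F) (i : Fin 3) (t : ℝ) (x : Fin 3 → ℝ) :
    pd i (fun y => F (t, y)) x = DD (ee i) F (t, x) :=
  pd_slice (hF.differentiable (by simp)) i t x

lemma pd2 {F : E3 → ℝ} (hF : ContDiff ℝ (⊤ : ℕ∞) F) (i j : Fin 3) (t : ℝ) (x : Fin 3 → ℝ) :
    pd i (pd j (fun y => F (t, y))) x = DD (ee i) (DD (ee j) F) (t, x) := by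
  have hb : pd j (fun y => F (t, y)) = fun y => DD (ee j) F (t, y) :=
    funext fun y => pd1 hF j t y
  rw [hb]
  exact pd1 (DD_smooth hF _) i t x

lemma sum_kd (X : Fin 3 → ℝ) (k : Fin 3) : (∑ l, X l * kd l k) = X k := by
  simp [kd, mul_ite, mul_one, mul_zero, Finset.sum_ite_eq']

noncomputable def Lam (B : Fin 3 → E3 → ℝ) (k i j : Fin 3) : E3 → ℝ := fun p =>
  (1 / 2) * (DD (ee k) (DD (ee i) (B j)) p + DD (ee k) (DD (ee j) (B i)) p)
  - ((1 / 2) * ∑ l, (DD (ee l) (DD (ee l) (B i)) p - DD (ee l) (DD (ee i) (B l)) p)) * kd j k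
  - ((1 / 2) * ∑ l, (DD (ee l) (DD (ee l) (B j)) p - DD (ee l) (DD (ee j) (B l)) p)) * kd i k

lemma Lam_smooth {B : Fin 3 → E3 → ℝ} (hB : ∀ a, ContDiff ℝ (⊤ : ℕ∞) (B a)) (k i j : Fin 3) :
    ContDiff ℝ (⊤ : ℕ∞) (Lam B k i j) := by
  unfold Lam
  have h2 : ∀ a b c, ContDiff ℝ (⊤ : ℕ∞) (fun p => DD (ee a) (DD (ee b) (B c)) p) :=
    fun a b c => DD_smooth (DD_smooth (hB c) _) _
  exact (((contDiff_const.mul ((h2 k i j).add (h2 k j i))).sub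
    ((contDiff_const.mul (ContDiff.sum fun l _ => (h2 l l i).sub (h2 l i l))).mul contDiff_const)).sub
    ((contDiff_const.mul (ContDiff.sum fun l _ => (h2 l l j).sub (h2 l j l))).mul contDiff_const))

lemma DD_Lam {B : Fin 3 → E3 → ℝ} (hB : ∀ a, ContDiff ℝ (⊤ : ℕ∞) (B a)) (v : E3) (k i j : Fin 3) :
    DD v (Lam B k i j) = fun p =>
      (1 / 2) * (DD v (DD (ee k) (DD (ee i) (B j))) p + DD v (DD (ee k) (DD (ee j) (B i))) p)
      - ((1 / 2) * ∑ l, (DD v (DD (ee l) (DD (ee l) (B i))) p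
          - DD v (DD (ee l) (DD (ee i) (B l))) p)) * kd j k
      - ((1 / 2) * ∑ l, (DD v (DD (ee l) (DD (ee l) (B j))) p
          - DD v (DD (ee l) (DD (ee j) (B l))) p)) * kd i k := by
  funext p
  have hat : ∀ a b c, HasFDerivAt (DD (ee a) (DD (ee b) (B c)))
      (fderiv ℝ (DD (ee a) (DD (ee b) (B c))) p) p :=
    fun a b c => (DD_diff (DD_smooth (hB c) _) _ p).hasFDerivAt
  have h1 := ((hat k i j).add (hat k j i)).const_mul ((1:ℝ)/2)
  have h2 := ((HasFDerivAt.sum (fun l (_ : l ∈ Finset.univ) =>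
      (hat l l i).sub (hat l i l))).const_mul ((1:ℝ)/2)).mul_const (kd j k)
  have h3 := ((HasFDerivAt.sum (fun l (_ : l ∈ Finset.univ) =>
      (hat l l j).sub (hat l j l))).const_mul ((1:ℝ)/2)).mul_const (kd i k)
  have hbig := (h1.sub h2).sub h3
  have e : fderiv ℝ (Lam B k i j) p =
      ((((1:ℝ)/2) • (fderiv ℝ (DD (ee k) (DD (ee i) (B j))) p
          + fderiv ℝ (DD (ee k) (DD (ee j) (B i))) p))
        - kd j k • (((1:ℝ)/2) • ∑ l, (fderiv ℝ (DD (ee l) (DD (ee l) (B i))) p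
          - fderiv ℝ (DD (ee l) (DD (ee i) (B l))) p)))
        - kd i k • (((1:ℝ)/2) • ∑ l, (fderiv ℝ (DD (ee l) (DD (ee l) (B j))) p
          - fderiv ℝ (DD (ee l) (DD (ee j) (B l))) p)) := hbig.fderiv
  show fderiv ℝ (Lam B k i j) p v = _
  rw [e]
  simp only [ContinuousLinearMap.sub_apply, ContinuousLinearMap.add_apply,
    ContinuousLinearMap.smul_apply, ContinuousLinearMap.sum_apply, smul_eq_mul, DD]
  ring

noncomputable def CfD (KK : Fin 3 → Fin 3 → E3 → ℝ) (j : Fin 3) : E3 → ℝ := fun p =>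
  (∑ l, DD (ee l) (KK l j) p) - ∑ l, DD (ee j) (KK l l) p

noncomputable def HfD (GG : Fin 3 → Fin 3 → Fin 3 → E3 → ℝ) (j k : Fin 3) : E3 → ℝ := fun p =>
  -(∑ l, DD (ee l) (GG k l j) p) + ∑ l, DD (ee j) (GG k l l) p

noncomputable def RfD (BB : Fin 3 → E3 → ℝ) (j k : Fin 3) : E3 → ℝ := fun p =>
  (∑ m, DD (ee j) (DD (ee k) (DD (ee m) (BB m))) p)
  - ∑ m, DD (ee j) (DD (ee m) (DD (ee m) (BB k))) p

lemma CfD_smooth {KK : Fin 3 → Fin 3 → E3 → ℝ} (hK : ∀ a b, ContDiff ℝ (⊤ : ℕ∞) (KK a b))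
    (j : Fin 3) : ContDiff ℝ (⊤ : ℕ∞) (CfD KK j) :=
  (ContDiff.sum fun l _ => DD_smooth (hK l j) _).sub
    (ContDiff.sum fun l _ => DD_smooth (hK l l) _)

lemma HfD_smooth {GG : Fin 3 → Fin 3 → Fin 3 → E3 → ℝ}
    (hG : ∀ c a b, ContDiff ℝ (⊤ : ℕ∞) (GG c a b)) (j k : Fin 3) : ContDiff ℝ (⊤ : ℕ∞) (HfD GG j k) :=
  ((ContDiff.sum fun l _ => DD_smooth (hG k l j) _).neg).add
    (ContDiff.sum fun l _ => DD_smooth (hG k l l) _)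

lemma RfD_smooth {BB : Fin 3 → E3 → ℝ} (hB : ∀ a, ContDiff ℝ (⊤ : ℕ∞) (BB a))
    (j k : Fin 3) : ContDiff ℝ (⊤ : ℕ∞) (RfD BB j k) :=
  (ContDiff.sum fun m _ => DD_smooth (DD_smooth (DD_smooth (hB m) _) _) _).sub
    (ContDiff.sum fun m _ => DD_smooth (DD_smooth (DD_smooth (hB k) _) _) _)

lemma DD_CfD {KK : Fin 3 → Fin 3 → E3 → ℝ} (hK : ∀ a b, ContDiff ℝ (⊤ : ℕ∞) (KK a b))
    (v : E3) (j : Fin 3) :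
    DD v (CfD KK j) = fun p =>
      (∑ l, DD v (DD (ee l) (KK l j)) p) - ∑ l, DD v (DD (ee j) (KK l l)) p := by
  funext p
  have hat : ∀ (w : E3) a b, HasFDerivAt (DD w (KK a b)) (fderiv ℝ (DD w (KK a b)) p) p :=
    fun w a b => (DD_diff (hK a b) w p).hasFDerivAt
  have hbig := (HasFDerivAt.sum (fun l (_ : l ∈ Finset.univ) => hat (ee l) l j)).sub
      (HasFDerivAt.sum (fun l (_ : l ∈ Finset.univ) => hat (ee j) l l))
  have e : fderiv ℝ (CfD KK j) p =
      (∑ l, fderiv ℝ (DD (ee l) (KK l j)) p) - ∑ l, fderiv ℝ (DD (ee j) (KK l l)) p :=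
    hbig.fderiv
  show fderiv ℝ (CfD KK j) p v = _
  rw [e]
  simp [ContinuousLinearMap.sub_apply, ContinuousLinearMap.sum_apply, DD]

lemma DD_HfD {GG : Fin 3 → Fin 3 → Fin 3 → E3 → ℝ} (hG : ∀ c a b, ContDiff ℝ (⊤ : ℕ∞) (GG c a b))
    (v : E3) (j k : Fin 3) :
    DD v (HfD GG j k) = fun p =>
      -(∑ l, DD v (DD (ee l) (GG k l j)) p) + ∑ l, DD v (DD (ee j) (GG k l l)) p := by
  funext p
  have hat : ∀ (w : E3) c a b, HasFDerivAt (DD w (GG c a b)) (fderiv ℝ (DD w (GG c a b)) p) p :=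
    fun w c a b => (DD_diff (hG c a b) w p).hasFDerivAt
  have hbig := ((HasFDerivAt.sum (fun l (_ : l ∈ Finset.univ) => hat (ee l) k l j)).neg).add
      (HasFDerivAt.sum (fun l (_ : l ∈ Finset.univ) => hat (ee j) k l l))
  have e : fderiv ℝ (HfD GG j k) p =
      -(∑ l, fderiv ℝ (DD (ee l) (GG k l j)) p) + ∑ l, fderiv ℝ (DD (ee j) (GG k l l)) p :=
    hbig.fderiv
  show fderiv ℝ (HfD GG j k) p v = _
  rw [e]
  simp [ContinuousLinearMap.add_apply, ContinuousLinearMap.neg_apply,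
    ContinuousLinearMap.sum_apply, DD]

lemma DD_RfD {BB : Fin 3 → E3 → ℝ} (hB : ∀ a, ContDiff ℝ (⊤ : ℕ∞) (BB a)) (v : E3) (j k : Fin 3) :
    DD v (RfD BB j k) = fun p =>
      (∑ m, DD v (DD (ee j) (DD (ee k) (DD (ee m) (BB m)))) p)
      - ∑ m, DD v (DD (ee j) (DD (ee m) (DD (ee m) (BB k)))) p := by
  funext p
  have hat : ∀ (u w z : E3) c, HasFDerivAt (DD u (DD w (DD z (BB c))))
      (fderiv ℝ (DD u (DD w (DD z (BB c)))) p) p :=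
    fun u w z c => (DD_diff (DD_smooth (DD_smooth (hB c) _) _) _ p).hasFDerivAt
  have hbig := (HasFDerivAt.sum (fun m (_ : m ∈ Finset.univ) => hat (ee j) (ee k) (ee m) m)).sub
      (HasFDerivAt.sum (fun m (_ : m ∈ Finset.univ) => hat (ee j) (ee m) (ee m) k))
  have e : fderiv ℝ (RfD BB j k) p =
      (∑ m, fderiv ℝ (DD (ee j) (DD (ee k) (DD (ee m) (BB m)))) p)
      - ∑ m, fderiv ℝ (DD (ee j) (DD (ee m) (DD (ee m) (BB k)))) p := hbig.fderiv
  show fderiv ℝ (RfD BB j k) p v = _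
  rw [e]
  simp [ContinuousLinearMap.sub_apply, ContinuousLinearMap.sum_apply, DD]

lemma DD_KevRHS {GG : Fin 3 → Fin 3 → Fin 3 → E3 → ℝ} {AA : E3 → ℝ}
    (hG : ∀ c a b, ContDiff ℝ (⊤ : ℕ∞) (GG c a b)) (hA : ContDiff ℝ (⊤ : ℕ∞) AA) (v : E3) (a b : Fin 3) :
    DD v (fun p => -(∑ k, DD (ee k) (GG k a b) p) - DD (ee a) (DD (ee b) AA) p)
      = fun p => -(∑ k, DD v (DD (ee k) (GG k a b)) p)
          - DD v (DD (ee a) (DD (ee b) AA)) p := by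
  funext p
  have hat : ∀ c, HasFDerivAt (DD (ee c) (GG c a b)) (fderiv ℝ (DD (ee c) (GG c a b)) p) p :=
    fun c => (DD_diff (hG c a b) _ p).hasFDerivAt
  have hatA : HasFDerivAt (DD (ee a) (DD (ee b) AA))
      (fderiv ℝ (DD (ee a) (DD (ee b) AA)) p) p :=
    (DD_diff (DD_smooth hA _) _ p).hasFDerivAt
  have hbig := ((HasFDerivAt.sum (fun c (_ : c ∈ Finset.univ) => hat c)).neg).sub hatA
  have e : fderiv ℝ (fun p => -(∑ k, DD (ee k) (GG k a b) p) - DD (ee a) (DD (ee b) AA) p) p =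
      -(∑ c, fderiv ℝ (DD (ee c) (GG c a b)) p) - fderiv ℝ (DD (ee a) (DD (ee b) AA)) p :=
    hbig.fderiv
  show fderiv ℝ _ p v = _
  rw [e]
  simp [ContinuousLinearMap.sub_apply, ContinuousLinearMap.neg_apply,
    ContinuousLinearMap.sum_apply, DD]

lemma DD_FevRHS {KK : Fin 3 → Fin 3 → E3 → ℝ} {BB : Fin 3 → E3 → ℝ}
    (hK : ∀ a b, ContDiff ℝ (⊤ : ℕ∞) (KK a b)) (hB : ∀ a, ContDiff ℝ (⊤ : ℕ∞) (BB a))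
    (v : E3) (c a b : Fin 3) :
    DD v (fun p => -DD (ee c) (KK a b) p + Lam BB c a b p)
      = fun p => -DD v (DD (ee c) (KK a b)) p + DD v (Lam BB c a b) p := by
  funext p
  have hatK : HasFDerivAt (DD (ee c) (KK a b)) (fderiv ℝ (DD (ee c) (KK a b)) p) p :=
    (DD_diff (hK a b) _ p).hasFDerivAt
  have hatL : HasFDerivAt (Lam BB c a b) (fderiv ℝ (Lam BB c a b) p) p :=
    ((Lam_smooth hB c a b).differentiable (by simp) p).hasFDerivAt
  have hbig := hatK.neg.add hatL
  have e : fderiv ℝ (fun p => -DD (ee c) (KK a b) p + Lam BB c a b p) p =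
      -fderiv ℝ (DD (ee c) (KK a b)) p + fderiv ℝ (Lam BB c a b) p := hbig.fderiv
  show fderiv ℝ _ p v = _
  rw [e]
  simp [ContinuousLinearMap.add_apply, ContinuousLinearMap.neg_apply, DD]

lemma hA_lemma {BB : Fin 3 → E3 → ℝ} (hB : ∀ a, ContDiff ℝ (⊤ : ℕ∞) (BB a)) (j k : Fin 3) :
    (fun p => ∑ l, DD (ee l) (Lam BB k l j) p)
      = fun p => ∑ m, DD (ee j) (DD (ee k) (DD (ee m) (BB m))) p := by
  funext p
  simp only [DD_Lam hB]
  have n1 : ∀ l : Fin 3, DD (ee l) (DD (ee k) (DD (ee l) (BB j))) p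
      = DD (ee k) (DD (ee l) (DD (ee l) (BB j))) p :=
    fun l => congrFun (DD_swap (DD_smooth (hB j) (ee l)) (ee l) (ee k)) p
  have n2 : ∀ l : Fin 3, DD (ee l) (DD (ee k) (DD (ee j) (BB l))) p
      = DD (ee j) (DD (ee k) (DD (ee l) (BB l))) p := by
    intro l
    calc DD (ee l) (DD (ee k) (DD (ee j) (BB l))) p
        = DD (ee l) (DD (ee j) (DD (ee k) (BB l))) p :=
          congrFun (congrArg (DD (ee l)) (DD_swap (hB l) (ee k) (ee j))) p
      _ = DD (ee j) (DD (ee l) (DD (ee k) (BB l))) p :=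
          congrFun (DD_swap (DD_smooth (hB l) (ee k)) (ee l) (ee j)) p
      _ = DD (ee j) (DD (ee k) (DD (ee l) (BB l))) p :=
          congrFun (congrArg (DD (ee j)) (DD_swap (hB l) (ee l) (ee k))) p
  have n3 : ∀ l m : Fin 3, DD (ee l) (DD (ee m) (DD (ee m) (BB l))) p
      = DD (ee m) (DD (ee m) (DD (ee l) (BB l))) p := by
    intro l m
    calc DD (ee l) (DD (ee m) (DD (ee m) (BB l))) p
        = DD (ee m) (DD (ee l) (DD (ee m) (BB l))) p :=
          congrFun (DD_swap (DD_smooth (hB l) (ee m)) (ee l) (ee m)) p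
      _ = DD (ee m) (DD (ee m) (DD (ee l) (BB l))) p :=
          congrFun (congrArg (DD (ee m)) (DD_swap (hB l) (ee l) (ee m))) p
  have n4 : ∀ l m : Fin 3, DD (ee l) (DD (ee m) (DD (ee l) (BB m))) p
      = DD (ee l) (DD (ee l) (DD (ee m) (BB m))) p :=
    fun l m => congrFun (congrArg (DD (ee l)) (DD_swap (hB m) (ee m) (ee l))) p
  have n6 : ∀ l m : Fin 3, DD (ee l) (DD (ee m) (DD (ee j) (BB m))) p
      = DD (ee j) (DD (ee l) (DD (ee m) (BB m))) p := by
    intro l m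
    calc DD (ee l) (DD (ee m) (DD (ee j) (BB m))) p
        = DD (ee l) (DD (ee j) (DD (ee m) (BB m))) p :=
          congrFun (congrArg (DD (ee l)) (DD_swap (hB m) (ee m) (ee j))) p
      _ = DD (ee j) (DD (ee l) (DD (ee m) (BB m))) p :=
          congrFun (DD_swap (DD_smooth (hB m) (ee m)) (ee l) (ee j)) p
  simp only [n1, n2, n4, n6]
  rw [Finset.sum_sub_distrib, Finset.sum_sub_distrib]
  rw [sum_kd (fun l => ((1:ℝ)/2) * ∑ m, (DD (ee l) (DD (ee m) (DD (ee m) (BB j))) p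
    - DD (ee j) (DD (ee l) (DD (ee m) (BB m))) p)) k]
  have e_b : (∑ l, (((1:ℝ)/2) * ∑ m, (DD (ee l) (DD (ee m) (DD (ee m) (BB l))) p
      - DD (ee l) (DD (ee l) (DD (ee m) (BB m))) p)) * kd j k) = 0 := by
    rw [← Finset.sum_mul]
    have h0 : (∑ l : Fin 3, ((1:ℝ)/2) * ∑ m : Fin 3,
        (DD (ee l) (DD (ee m) (DD (ee m) (BB l))) p
          - DD (ee l) (DD (ee l) (DD (ee m) (BB m))) p)) = 0 := by
      rw [← Finset.mul_sum]
      have h1 : (∑ l : Fin 3, ∑ m : Fin 3,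
          (DD (ee l) (DD (ee m) (DD (ee m) (BB l))) p
            - DD (ee l) (DD (ee l) (DD (ee m) (BB m))) p)) = 0 := by
        simp only [Finset.sum_sub_distrib]
        have h2 : (∑ l : Fin 3, ∑ m : Fin 3, DD (ee l) (DD (ee m) (DD (ee m) (BB l))) p)
            = ∑ l : Fin 3, ∑ m : Fin 3, DD (ee m) (DD (ee m) (DD (ee l) (BB l))) p :=
          Finset.sum_congr rfl fun l _ => Finset.sum_congr rfl fun m _ => n3 l m
        rw [h2, Finset.sum_comm]
        exact sub_self _
      rw [h1, mul_zero]
    rw [h0, zero_mul]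
  rw [e_b]
  rw [show (∑ l, ((1:ℝ)/2) * (DD (ee k) (DD (ee l) (DD (ee l) (BB j))) p
      + DD (ee j) (DD (ee k) (DD (ee l) (BB l))) p))
    = ((1:ℝ)/2) * ∑ l, (DD (ee k) (DD (ee l) (DD (ee l) (BB j))) p
      + DD (ee j) (DD (ee k) (DD (ee l) (BB l))) p) from (Finset.mul_sum _ _ _).symm]
  rw [Finset.sum_add_distrib, Finset.sum_sub_distrib]
  ring

lemma hB_lemma {BB : Fin 3 → E3 → ℝ} (hB : ∀ a, ContDiff ℝ (⊤ : ℕ∞) (BB a)) (j k : Fin 3) :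
    (fun p => ∑ l, DD (ee j) (Lam BB k l l) p)
      = fun p => 2 * (∑ m, DD (ee j) (DD (ee k) (DD (ee m) (BB m))) p)
          - ∑ m, DD (ee j) (DD (ee m) (DD (ee m) (BB k))) p := by
  funext p
  simp only [DD_Lam hB]
  have n8 : ∀ l m : Fin 3, DD (ee j) (DD (ee m) (DD (ee l) (BB m))) p
      = DD (ee j) (DD (ee l) (DD (ee m) (BB m))) p :=
    fun l m => congrFun (congrArg (DD (ee j)) (DD_swap (hB m) (ee m) (ee l))) p
  simp only [n8]
  rw [Finset.sum_sub_distrib, Finset.sum_sub_distrib]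
  rw [sum_kd]
  rw [show (∑ l, ((1:ℝ)/2) * (DD (ee j) (DD (ee k) (DD (ee l) (BB l))) p
      + DD (ee j) (DD (ee k) (DD (ee l) (BB l))) p))
    = ((1:ℝ)/2) * ∑ l, (DD (ee j) (DD (ee k) (DD (ee l) (BB l))) p
      + DD (ee j) (DD (ee k) (DD (ee l) (BB l))) p) from (Finset.mul_sum _ _ _).symm]
  rw [Finset.sum_add_distrib, Finset.sum_sub_distrib]
  ring

lemma sumRf_zero {BB : Fin 3 → E3 → ℝ} (hB : ∀ a, ContDiff ℝ (⊤ : ℕ∞) (BB a)) (j : Fin 3) (p : E3) :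
    (∑ k, DD (ee k) (RfD BB j k) p) = 0 := by
  have expand : ∀ k, DD (ee k) (RfD BB j k) p
      = (∑ m, DD (ee k) (DD (ee j) (DD (ee k) (DD (ee m) (BB m)))) p)
        - ∑ m, DD (ee k) (DD (ee j) (DD (ee m) (DD (ee m) (BB k)))) p :=
    fun k => congrFun (DD_RfD hB (ee k) j k) p
  simp only [expand]
  have p1 : ∀ k m : Fin 3, DD (ee k) (DD (ee j) (DD (ee k) (DD (ee m) (BB m)))) p
      = DD (ee j) (DD (ee k) (DD (ee k) (DD (ee m) (BB m)))) p :=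
    fun k m => congrFun (DD_swap (DD_smooth (DD_smooth (hB m) (ee m)) (ee k)) (ee k) (ee j)) p
  have p2 : ∀ k m : Fin 3, DD (ee k) (DD (ee j) (DD (ee m) (DD (ee m) (BB k)))) p
      = DD (ee j) (DD (ee k) (DD (ee m) (DD (ee m) (BB k)))) p :=
    fun k m => congrFun (DD_swap (DD_smooth (DD_smooth (hB k) (ee m)) (ee m)) (ee k) (ee j)) p
  simp only [p1, p2]
  rw [Finset.sum_sub_distrib]
  rw [show (∑ k : Fin 3, ∑ m : Fin 3,
      DD (ee j) (DD (ee k) (DD (ee m) (DD (ee m) (BB k)))) p)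
    = ∑ m : Fin 3, ∑ k : Fin 3,
      DD (ee j) (DD (ee k) (DD (ee m) (DD (ee m) (BB k)))) p from Finset.sum_comm]
  have p3 : ∀ k m : Fin 3, DD (ee j) (DD (ee m) (DD (ee k) (DD (ee k) (BB m)))) p
      = DD (ee j) (DD (ee k) (DD (ee k) (DD (ee m) (BB m)))) p := by
    intro k m
    have s1 : DD (ee m) (DD (ee k) (DD (ee k) (BB m)))
        = DD (ee k) (DD (ee m) (DD (ee k) (BB m))) :=
      DD_swap (DD_smooth (hB m) (ee k)) (ee m) (ee k)
    have s2 : DD (ee m) (DD (ee k) (BB m)) = DD (ee k) (DD (ee m) (BB m)) :=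
      DD_swap (hB m) (ee m) (ee k)
    calc DD (ee j) (DD (ee m) (DD (ee k) (DD (ee k) (BB m)))) p
        = DD (ee j) (DD (ee k) (DD (ee m) (DD (ee k) (BB m)))) p :=
          congrFun (congrArg (DD (ee j)) s1) p
      _ = DD (ee j) (DD (ee k) (DD (ee k) (DD (ee m) (BB m)))) p :=
          congrFun (congrArg (fun Z => DD (ee j) (DD (ee k) Z)) s2) p
  have h2 : (∑ m : Fin 3, ∑ k : Fin 3,
      DD (ee j) (DD (ee k) (DD (ee m) (DD (ee m) (BB k)))) p)
      = ∑ m : Fin 3, ∑ k : Fin 3,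
      DD (ee j) (DD (ee m) (DD (ee m) (DD (ee k) (BB k)))) p :=
    Finset.sum_congr rfl fun m _ => Finset.sum_congr rfl fun k _ => p3 m k
  rw [h2]
  exact sub_self _

lemma DD_addfun {F G : E3 → ℝ} (hF : Differentiable ℝ F) (hG : Differentiable ℝ G) (v : E3) :
    DD v (fun p => F p + G p) = fun p => DD v F p + DD v G p := by
  funext p
  show fderiv ℝ (fun p => F p + G p) p v = _
  rw [fderiv_fun_add (hF p) (hG p)]
  rfl

lemma DD_sumfun {F : Fin 3 → E3 → ℝ} (hF : ∀ k, ContDiff ℝ (⊤ : ℕ∞) (F k)) (v : E3) :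
    DD v (fun p => ∑ k, F k p) = fun p => ∑ k, DD v (F k) p := by
  funext p
  show fderiv ℝ (fun p => ∑ k, F k p) p v = _
  rw [fderiv_fun_sum (fun k _ => (hF k).differentiable (by simp) p)]
  simp only [ContinuousLinearMap.sum_apply]
  rfl

/-- for solutions of the linearized EC evolution equations for `K` and `f`,
the momentum constraint function `C_j` satisfies the homogeneous wave equation
`∂_t² C_j = ∂^k ∂_k C_j`. -/
theorem momentum_constraint_satisfies_wave_equation
    (K : Fin 3 → Fin 3 → ℝ → (Fin 3 → ℝ) → ℝ)
    (f : Fin 3 → Fin 3 → Fin 3 → ℝ → (Fin 3 → ℝ) → ℝ)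
    (α : ℝ → (Fin 3 → ℝ) → ℝ) (β : Fin 3 → ℝ → (Fin 3 → ℝ) → ℝ)
    (hK_smooth : ∀ i j, SmoothT (K i j)) (hf_smooth : ∀ k i j, SmoothT (f k i j))
    (hα_smooth : SmoothT α) (hβ_smooth : ∀ i, SmoothT (β i))
    (hK_symm : ∀ i j, K i j = K j i) (hf_symm : ∀ k i j, f k i j = f k j i)
    (hKev : ∀ i j t x, dt (K i j) t x =
      -(∑ k, pd k (f k i j t) x) - pd i (pd j (α t)) x)
    (hFev : ∀ k i j t x, dt (f k i j) t x = -pd k (K i j t) x + Lsh β k i j t x) :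
    ∀ j t x,
      deriv (fun s => deriv (fun r => Cmom K j r x) s) t =
        ∑ k, pd k (pd k (Cmom K j t)) x := by
  intro j t x
  have sK : ∀ a b, ContDiff ℝ (⊤ : ℕ∞) (unc (K a b)) := hK_smooth
  have sG : ∀ c a b, ContDiff ℝ (⊤ : ℕ∞) (unc (f c a b)) := hf_smooth
  have sA : ContDiff ℝ (⊤ : ℕ∞) (unc α) := hα_smooth
  have sB : ∀ a, ContDiff ℝ (⊤ : ℕ∞) (unc (β a)) := hβ_smooth
  -- translate the shift term
  have hLsh : ∀ (c a b : Fin 3) (t' : ℝ) (x' : Fin 3 → ℝ),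
      Lsh β c a b t' x' = Lam (fun d => unc (β d)) c a b (t', x') := by
    intro c a b t' x'
    have h2 : ∀ u v w : Fin 3, pd u (pd v (β w t')) x'
        = DD (ee u) (DD (ee v) (unc (β w))) (t', x') := fun u v w => pd2 (sB w) u v t' x'
    simp only [Lsh, Lam, h2]
  -- K evolution in DD form
  have hKD : ∀ a b, DD tauv (unc (K a b)) = fun p =>
      -(∑ c, DD (ee c) (unc (f c a b)) p) - DD (ee a) (DD (ee b) (unc α)) p := by
    intro a b; funext p
    obtain ⟨t', x'⟩ := p
    have e0 : dt (K a b) t' x' = DD tauv (unc (K a b)) (t', x') :=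
      deriv_slice ((sK a b).differentiable (by simp)) t' x'
    have e1 : ∀ c : Fin 3, pd c (f c a b t') x' = DD (ee c) (unc (f c a b)) (t', x') :=
      fun c => pd1 (sG c a b) c t' x'
    have e2 : pd a (pd b (α t')) x' = DD (ee a) (DD (ee b) (unc α)) (t', x') :=
      pd2 sA a b t' x'
    rw [← e0, hKev a b t' x']
    simp only [e1, e2]
  -- f evolution in DD form
  have hFD : ∀ c a b, DD tauv (unc (f c a b)) = fun p =>
      -DD (ee c) (unc (K a b)) p + Lam (fun d => unc (β d)) c a b p := by
    intro c a b; funext p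
    obtain ⟨t', x'⟩ := p
    have e0 : dt (f c a b) t' x' = DD tauv (unc (f c a b)) (t', x') :=
      deriv_slice ((sG c a b).differentiable (by simp)) t' x'
    have e1 : pd c (K a b t') x' = DD (ee c) (unc (K a b)) (t', x') := pd1 (sK a b) c t' x'
    rw [← e0, hFev c a b t' x', e1, hLsh c a b t' x']
  have sCf : ContDiff ℝ (⊤ : ℕ∞) (CfD (fun a b => unc (K a b)) j) := CfD_smooth sK j
  -- slice identity for Cmom
  have hCslice : ∀ (t' : ℝ) (x' : Fin 3 → ℝ),
      Cmom K j t' x' = CfD (fun a b => unc (K a b)) j (t', x') := by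
    intro t' x'
    have e1 : ∀ l : Fin 3, pd l (K l j t') x' = DD (ee l) (unc (K l j)) (t', x') :=
      fun l => pd1 (sK l j) l t' x'
    have e2 : pd j (fun y => ∑ l, K l l t' y) x'
        = DD (ee j) (fun p => ∑ l, unc (K l l) p) (t', x') :=
      pd1 (ContDiff.sum fun l _ => sK l l) j t' x'
    have e3 : DD (ee j) (fun p => ∑ l, unc (K l l) p) (t', x')
        = ∑ l, DD (ee j) (unc (K l l)) (t', x') :=
      congrFun (DD_sumfun (fun l => sK l l) (ee j)) (t', x')
    simp only [Cmom, e1, e2, e3, CfD]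
  -- translate goal LHS
  have hL1 : (fun s => deriv (fun r => Cmom K j r x) s)
      = fun s => DD tauv (CfD (fun a b => unc (K a b)) j) (s, x) := by
    funext s
    rw [show (fun r => Cmom K j r x)
        = fun r => CfD (fun a b => unc (K a b)) j (r, x) from funext fun r => hCslice r x]
    exact deriv_slice (sCf.differentiable (by simp)) s x
  rw [hL1, deriv_slice (DD_diff sCf tauv) t x]
  -- translate goal RHS
  have hR : ∀ k : Fin 3, pd k (pd k (Cmom K j t)) x
      = DD (ee k) (DD (ee k) (CfD (fun a b => unc (K a b)) j)) (t, x) := by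
    intro k
    rw [show Cmom K j t = fun y => CfD (fun a b => unc (K a b)) j (t, y) from
      funext fun y => hCslice t y]
    exact pd2 sCf k k t x
  simp only [hR]
  -- step 1 : first time derivative of the constraint
  have step1 : DD tauv (CfD (fun a b => unc (K a b)) j)
      = fun p => ∑ k, DD (ee k) (HfD (fun c a b => unc (f c a b)) j k) p := by
    rw [DD_CfD sK tauv j]
    funext p
    have sw1 : ∀ l : Fin 3, DD tauv (DD (ee l) (unc (K l j)))
        = DD (ee l) (DD tauv (unc (K l j))) := fun l => DD_swap (sK l j) tauv (ee l)
    have sw2 : ∀ l : Fin 3, DD tauv (DD (ee j) (unc (K l l)))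
        = DD (ee j) (DD tauv (unc (K l l))) := fun l => DD_swap (sK l l) tauv (ee j)
    simp only [sw1, sw2, hKD]
    simp only [show ∀ (w : E3) (a b : Fin 3),
        DD w (fun p => -(∑ c, DD (ee c) (unc (f c a b)) p)
          - DD (ee a) (DD (ee b) (unc α)) p)
        = fun p => -(∑ c, DD w (DD (ee c) (unc (f c a b))) p)
          - DD w (DD (ee a) (DD (ee b) (unc α))) p from
      fun w a b => DD_KevRHS sG sA w a b]
    simp only [show ∀ k : Fin 3, DD (ee k) (HfD (fun c a b => unc (f c a b)) j k)
        = fun p => -(∑ l, DD (ee k) (DD (ee l) (unc (f k l j))) p)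
          + ∑ l, DD (ee k) (DD (ee j) (unc (f k l l))) p from
      fun k => DD_HfD sG (ee k) j k]
    have aα : ∀ l : Fin 3, DD (ee l) (DD (ee l) (DD (ee j) (unc α))) p
        = DD (ee j) (DD (ee l) (DD (ee l) (unc α))) p := by
      intro l
      calc DD (ee l) (DD (ee l) (DD (ee j) (unc α))) p
          = DD (ee l) (DD (ee j) (DD (ee l) (unc α))) p :=
            congrFun (congrArg (DD (ee l)) (DD_swap sA (ee l) (ee j))) p
        _ = DD (ee j) (DD (ee l) (DD (ee l) (unc α))) p :=
            congrFun (DD_swap (DD_smooth sA (ee l)) (ee l) (ee j)) p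
    have t1 : (∑ l : Fin 3, (-(∑ c : Fin 3, DD (ee l) (DD (ee c) (unc (f c l j))) p)
          - DD (ee l) (DD (ee l) (DD (ee j) (unc α))) p))
        = -(∑ c : Fin 3, ∑ l : Fin 3, DD (ee c) (DD (ee l) (unc (f c l j))) p)
          - ∑ l : Fin 3, DD (ee j) (DD (ee l) (DD (ee l) (unc α))) p := by
      rw [Finset.sum_sub_distrib]
      congr 1
      · rw [Finset.sum_neg_distrib]
        congr 1
        rw [show (∑ l : Fin 3, ∑ c : Fin 3, DD (ee l) (DD (ee c) (unc (f c l j))) p)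
            = ∑ l : Fin 3, ∑ c : Fin 3, DD (ee c) (DD (ee l) (unc (f c l j))) p from
          Finset.sum_congr rfl fun l _ => Finset.sum_congr rfl fun c _ =>
            congrFun (DD_swap (sG c l j) (ee l) (ee c)) p]
        exact Finset.sum_comm
      · exact Finset.sum_congr rfl fun l _ => aα l
    have t2 : (∑ l : Fin 3, (-(∑ c : Fin 3, DD (ee j) (DD (ee c) (unc (f c l l))) p)
          - DD (ee j) (DD (ee l) (DD (ee l) (unc α))) p))
        = -(∑ c : Fin 3, ∑ l : Fin 3, DD (ee c) (DD (ee j) (unc (f c l l))) p)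
          - ∑ l : Fin 3, DD (ee j) (DD (ee l) (DD (ee l) (unc α))) p := by
      rw [Finset.sum_sub_distrib]
      congr 1
      rw [Finset.sum_neg_distrib]
      congr 1
      rw [show (∑ l : Fin 3, ∑ c : Fin 3, DD (ee j) (DD (ee c) (unc (f c l l))) p)
          = ∑ l : Fin 3, ∑ c : Fin 3, DD (ee c) (DD (ee j) (unc (f c l l))) p from
        Finset.sum_congr rfl fun l _ => Finset.sum_congr rfl fun c _ =>
          congrFun (DD_swap (sG c l l) (ee j) (ee c)) p]
      exact Finset.sum_comm
    have t3 : (∑ k : Fin 3, (-(∑ l : Fin 3, DD (ee k) (DD (ee l) (unc (f k l j))) p)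
          + ∑ l : Fin 3, DD (ee k) (DD (ee j) (unc (f k l l))) p))
        = -(∑ k : Fin 3, ∑ l : Fin 3, DD (ee k) (DD (ee l) (unc (f k l j))) p)
          + ∑ k : Fin 3, ∑ l : Fin 3, DD (ee k) (DD (ee j) (unc (f k l l))) p := by
      rw [Finset.sum_add_distrib, Finset.sum_neg_distrib]
    rw [t1, t2, t3]
    ring
  -- step 2 : second time derivative
  have sHf : ∀ k, ContDiff ℝ (⊤ : ℕ∞) (HfD (fun c a b => unc (f c a b)) j k) :=
    fun k => HfD_smooth sG j k
  have hHf : ∀ k : Fin 3, DD tauv (HfD (fun c a b => unc (f c a b)) j k)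
      = fun p => DD (ee k) (CfD (fun a b => unc (K a b)) j) p
          + RfD (fun d => unc (β d)) j k p := by
    intro k
    rw [DD_HfD sG tauv j k]
    funext p
    have sw1 : ∀ l : Fin 3, DD tauv (DD (ee l) (unc (f k l j)))
        = DD (ee l) (DD tauv (unc (f k l j))) := fun l => DD_swap (sG k l j) tauv (ee l)
    have sw2 : ∀ l : Fin 3, DD tauv (DD (ee j) (unc (f k l l)))
        = DD (ee j) (DD tauv (unc (f k l l))) := fun l => DD_swap (sG k l l) tauv (ee j)
    simp only [sw1, sw2, hFD]
    simp only [show ∀ (w : E3) (a b : Fin 3),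
        DD w (fun p => -DD (ee k) (unc (K a b)) p + Lam (fun d => unc (β d)) k a b p)
        = fun p => -DD w (DD (ee k) (unc (K a b))) p
          + DD w (Lam (fun d => unc (β d)) k a b) p from
      fun w a b => DD_FevRHS sK sB w k a b]
    have s1 : (∑ l : Fin 3, (-DD (ee l) (DD (ee k) (unc (K l j))) p
          + DD (ee l) (Lam (fun d => unc (β d)) k l j) p))
        = -(∑ l : Fin 3, DD (ee k) (DD (ee l) (unc (K l j))) p)
          + ∑ l : Fin 3, DD (ee l) (Lam (fun d => unc (β d)) k l j) p := by
      rw [Finset.sum_add_distrib, Finset.sum_neg_distrib]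
      congr 2
      exact Finset.sum_congr rfl fun l _ => congrFun (DD_swap (sK l j) (ee l) (ee k)) p
    have s2 : (∑ l : Fin 3, (-DD (ee j) (DD (ee k) (unc (K l l))) p
          + DD (ee j) (Lam (fun d => unc (β d)) k l l) p))
        = -(∑ l : Fin 3, DD (ee k) (DD (ee j) (unc (K l l))) p)
          + ∑ l : Fin 3, DD (ee j) (Lam (fun d => unc (β d)) k l l) p := by
      rw [Finset.sum_add_distrib, Finset.sum_neg_distrib]
      congr 2
      exact Finset.sum_congr rfl fun l _ => congrFun (DD_swap (sK l l) (ee j) (ee k)) p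
    rw [s1, s2]
    have eA : (∑ l : Fin 3, DD (ee l) (Lam (fun d => unc (β d)) k l j) p)
        = ∑ m : Fin 3, DD (ee j) (DD (ee k) (DD (ee m) (unc (β m)))) p :=
      congrFun (hA_lemma sB j k) p
    have eB : (∑ l : Fin 3, DD (ee j) (Lam (fun d => unc (β d)) k l l) p)
        = 2 * (∑ m : Fin 3, DD (ee j) (DD (ee k) (DD (ee m) (unc (β m)))) p)
          - ∑ m : Fin 3, DD (ee j) (DD (ee m) (DD (ee m) (unc (β k)))) p :=
      congrFun (hB_lemma sB j k) p
    rw [eA, eB, congrFun (DD_CfD sK (ee k) j) p]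
    simp only [RfD]
    ring
  -- assemble
  rw [step1, DD_sumfun (fun k => DD_smooth (sHf k) (ee k)) tauv]
  have sw : ∀ k : Fin 3, DD tauv (DD (ee k) (HfD (fun c a b => unc (f c a b)) j k))
      = DD (ee k) (DD tauv (HfD (fun c a b => unc (f c a b)) j k)) :=
    fun k => DD_swap (sHf k) tauv (ee k)
  simp only [sw, hHf]
  simp only [show ∀ k : Fin 3,
      DD (ee k) (fun q => DD (ee k) (CfD (fun a b => unc (K a b)) j) q
        + RfD (fun d => unc (β d)) j k q)
      = fun q => DD (ee k) (DD (ee k) (CfD (fun a b => unc (K a b)) j)) q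
        + DD (ee k) (RfD (fun d => unc (β d)) j k) q from
    fun k => DD_addfun (DD_diff sCf (ee k))
      ((RfD_smooth sB j k).differentiable (by simp)) (ee k)]
  rw [Finset.sum_add_distrib, sumRf_zero sB j (t, x), add_zero]
end

section
/- Let g_ij be a smooth symmetric 2-tensor field on ℝ³ and define f_kij := (1/2)[∂_k g_ij − (∂^l g_li − ∂_i g_l^l)δ_jk − (∂^l g_lj − ∂_j g_l^l)δ_ik]. Then ∂^k(∂^l f_klj − ∂_j f_kl^l) = (1/2)∂_j C, where C := ∂^j(∂^l g_lj − ∂_j g_l^l). In particular, if g_ij satisfies the Hamiltonian constraint C = 0, then f_kij satisfies the f-constraint ∂^k(∂^l f_klj − ∂_j f_kl^l) = 0. -/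
open scoped BigOperators

/-- Hamiltonian constraint function `C = ∂^j(∂^l g_lj − ∂_j g_l^l)`. -/
noncomputable def Cham (g : Fin 3 → Fin 3 → (Fin 3 → ℝ) → ℝ) : (Fin 3 → ℝ) → ℝ :=
  fun x => ∑ j, pd j (fun y => (∑ l, pd l (g l j) y) - pd j (fun z => ∑ l, g l l z) y) x

/-- The f-constraint function `∂^k(∂^l f_klj − ∂_j f_kl^l)`. -/
noncomputable def Fcon (f : Fin 3 → Fin 3 → Fin 3 → (Fin 3 → ℝ) → ℝ) (j : Fin 3) :
    (Fin 3 → ℝ) → ℝ :=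
  fun x => ∑ k,
    pd k (fun y => (∑ l, pd l (f k l j) y) - pd j (fun z => ∑ l, f k l l z) y) x

section basiclems
variable {u v : (Fin 3 → ℝ) → ℝ}

lemma contDiff_pd (hu : ContDiff ℝ (⊤ : ℕ∞) u) (i : Fin 3) : ContDiff ℝ (⊤ : ℕ∞) (pd i u) := by
  have h := hu.fderiv_right (m := (⊤ : ℕ∞)) (by simp)
  exact h.clm_apply contDiff_const

lemma diff_pd (hu : ContDiff ℝ (⊤ : ℕ∞) u) (i : Fin 3) : Differentiable ℝ (pd i u) :=
  (contDiff_pd hu i).differentiable (by simp)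

lemma pd_comm (hu : ContDiff ℝ (⊤ : ℕ∞) u) (i j : Fin 3) : pd i (pd j u) = pd j (pd i u) := by
  funext x
  have hdu : Differentiable ℝ (fderiv ℝ u) :=
    (hu.fderiv_right (m := (⊤ : ℕ∞)) (by simp)).differentiable (by simp)
  have key : ∀ (a : Fin 3) (w : Fin 3 → ℝ),
      pd a (fun y => fderiv ℝ u y w) x = fderiv ℝ (fderiv ℝ u) x (Pi.single a 1) w := by
    intro a w
    have h := fderiv_clm_apply (c := fderiv ℝ u) (u := fun _ => w) (hdu x)
      (differentiableAt_const w)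
    simp only [pd, h, fderiv_fun_const, Pi.zero_apply, ContinuousLinearMap.add_apply,
      ContinuousLinearMap.comp_apply, ContinuousLinearMap.zero_apply,
      ContinuousLinearMap.flip_apply, map_zero, zero_add]
  have hsym : IsSymmSndFDerivAt ℝ u x :=
    hu.contDiffAt.isSymmSndFDerivAt (by simp [minSmoothness_of_isRCLikeNormedField]; exact WithTop.coe_le_coe.mpr le_top)
  have e1 : pd i (pd j u) x = fderiv ℝ (fderiv ℝ u) x (Pi.single i 1) (Pi.single j 1) :=
    key i (Pi.single j 1)
  have e2 : pd j (pd i u) x = fderiv ℝ (fderiv ℝ u) x (Pi.single j 1) (Pi.single i 1) :=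
    key j (Pi.single i 1)
  rw [e1, e2, hsym (Pi.single i 1) (Pi.single j 1)]

lemma pd_sub (hu : Differentiable ℝ u) (hv : Differentiable ℝ v) (i : Fin 3) :
    pd i (fun x => u x - v x) = fun x => pd i u x - pd i v x := by
  funext x; simp [pd, fderiv_fun_sub (hu x) (hv x)]

lemma pd_add (hu : Differentiable ℝ u) (hv : Differentiable ℝ v) (i : Fin 3) :
    pd i (fun x => u x + v x) = fun x => pd i u x + pd i v x := by
  funext x; simp [pd, fderiv_fun_add (hu x) (hv x)]

lemma pd_const_mul (c : ℝ) (hu : Differentiable ℝ u) (i : Fin 3) :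
    pd i (fun x => c * u x) = fun x => c * pd i u x := by
  funext x; rw [pd, fderiv_const_mul (hu x) c]; simp [pd]

lemma pd_mul_const (c : ℝ) (hu : Differentiable ℝ u) (i : Fin 3) :
    pd i (fun x => u x * c) = fun x => pd i u x * c := by
  funext x; rw [pd, fderiv_mul_const (hu x) c]; simp [pd, mul_comm]

lemma pd_sum (U : Fin 3 → (Fin 3 → ℝ) → ℝ) (hU : ∀ l, Differentiable ℝ (U l)) (i : Fin 3) :
    pd i (fun x => ∑ l, U l x) = fun x => ∑ l, pd i (U l) x := by
  funext x
  simp [pd, fderiv_fun_sum (fun l _ => (hU l) x)]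

lemma pd_comb3 (i : Fin 3) (a b c : ℝ) {u v w : (Fin 3 → ℝ) → ℝ}
    (hu : Differentiable ℝ u) (hv : Differentiable ℝ v) (hw : Differentiable ℝ w) :
    pd i (fun x => a * (u x - v x * b - w x * c)) =
      fun x => a * (pd i u x - pd i v x * b - pd i w x * c) := by
  have h1 : Differentiable ℝ (fun x => v x * b) := hv.mul_const b
  have h2 : Differentiable ℝ (fun x => w x * c) := hw.mul_const c
  rw [pd_const_mul a (u := fun x => u x - v x * b - w x * c)
      (((hu.sub h1).sub h2)) i,
    pd_sub (u := fun x => u x - v x * b) (v := fun x => w x * c) (hu.sub h1) h2 i,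
    pd_sub (u := u) (v := fun x => v x * b) hu h1 i,
    pd_mul_const b hv i, pd_mul_const c hw i]

lemma pd_comb2 (i : Fin 3) (a : ℝ) {u v : (Fin 3 → ℝ) → ℝ}
    (hu : Differentiable ℝ u) (hv : Differentiable ℝ v) :
    pd i (fun x => a * (u x - 2 * v x)) = fun x => a * (pd i u x - 2 * pd i v x) := by
  have h1 : Differentiable ℝ (fun x => (2:ℝ) * v x) := hv.const_mul 2
  rw [pd_const_mul a (u := fun x => u x - 2 * v x) (hu.sub h1) i,
    pd_sub (u := u) (v := fun x => 2 * v x) hu h1 i,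
    pd_const_mul 2 hv i]

lemma pd_comb5 (i : Fin 3) (a b : ℝ) {u1 u2 u3 u4 u5 : (Fin 3 → ℝ) → ℝ}
    (h1 : Differentiable ℝ u1) (h2 : Differentiable ℝ u2) (h3 : Differentiable ℝ u3)
    (h4 : Differentiable ℝ u4) (h5 : Differentiable ℝ u5) :
    pd i (fun x => a * (u1 x - u2 x * b - u3 x - u4 x + 2 * u5 x)) =
      fun x => a * (pd i u1 x - pd i u2 x * b - pd i u3 x - pd i u4 x + 2 * pd i u5 x) := by
  have d2 : Differentiable ℝ (fun x => u2 x * b) := h2.mul_const b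
  have d5 : Differentiable ℝ (fun x => (2:ℝ) * u5 x) := h5.const_mul 2
  rw [pd_const_mul a (u := fun x => u1 x - u2 x * b - u3 x - u4 x + 2 * u5 x)
      (((((h1.sub d2).sub h3).sub h4).add d5)) i,
    pd_add (u := fun x => u1 x - u2 x * b - u3 x - u4 x) (v := fun x => 2 * u5 x)
      ((((h1.sub d2).sub h3).sub h4)) d5 i,
    pd_sub (u := fun x => u1 x - u2 x * b - u3 x) (v := u4) (((h1.sub d2).sub h3)) h4 i,
    pd_sub (u := fun x => u1 x - u2 x * b) (v := u3) ((h1.sub d2)) h3 i,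
    pd_sub (u := u1) (v := fun x => u2 x * b) h1 d2 i,
    pd_mul_const b h2 i, pd_const_mul 2 h5 i]

lemma sum_mul_kd (F : Fin 3 → ℝ) (k : Fin 3) : ∑ l, F l * kd l k = F k := by
  simp [kd, mul_ite]

lemma sum_mul_kd' (F : Fin 3 → ℝ) (j : Fin 3) : ∑ k, F k * kd j k = F j := by
  simp [kd, mul_ite]

lemma sum_half_comb (a : ℝ) (P Q R : Fin 3 → ℝ) (b : ℝ) (k : Fin 3) :
    ∑ l, a * (P l - Q l * b - R l * kd l k)
      = a * ((∑ l, P l) - (∑ l, Q l) * b - R k) := by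
  rw [← Finset.mul_sum]
  congr 1
  rw [Finset.sum_sub_distrib, Finset.sum_sub_distrib, ← Finset.sum_mul, sum_mul_kd]

end basiclems

section aux
/-- trace of g -/
noncomputable def Ttr (g : Fin 3 → Fin 3 → (Fin 3 → ℝ) → ℝ) : (Fin 3 → ℝ) → ℝ :=
  fun z => ∑ l, g l l z

/-- `V_j = ∂^l g_lj − ∂_j g_l^l` -/
noncomputable def Vv (g : Fin 3 → Fin 3 → (Fin 3 → ℝ) → ℝ) (j : Fin 3) : (Fin 3 → ℝ) → ℝ :=
  fun x => (∑ l, pd l (g l j) x) - pd j (Ttr g) x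

variable {g : Fin 3 → Fin 3 → (Fin 3 → ℝ) → ℝ} (hg : ∀ i j, ContDiff ℝ (⊤ : ℕ∞) (g i j))

include hg

lemma hTtr : ContDiff ℝ (⊤ : ℕ∞) (Ttr g) := ContDiff.sum fun l _ => hg l l

lemma hVv (j : Fin 3) : ContDiff ℝ (⊤ : ℕ∞) (Vv g j) :=
  (ContDiff.sum fun l _ => contDiff_pd (hg l j) l).sub (contDiff_pd (hTtr hg) j)

lemma pdV (a b : Fin 3) :
    pd a (Vv g b) = fun x => (∑ m, pd a (pd m (g m b)) x) - pd a (pd b (Ttr g)) x := by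
  have h1 : Differentiable ℝ (fun x => ∑ m, pd m (g m b) x) :=
    (ContDiff.sum fun m _ => contDiff_pd (hg m b) m).differentiable (by simp)
  have h2 : Differentiable ℝ (pd b (Ttr g)) := diff_pd (hTtr hg) b
  have e : Vv g b = fun x => (fun x => ∑ m, pd m (g m b) x) x - (pd b (Ttr g)) x := rfl
  rw [e, pd_sub (u := fun x => ∑ m, pd m (g m b) x) (v := pd b (Ttr g)) h1 h2 a,
    pd_sum (fun m => pd m (g m b)) (fun m => diff_pd (hg m b) m) a]

lemma pd_pd_V (a b c : Fin 3) :
    pd a (pd b (Vv g c)) =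
      fun x => (∑ m, pd a (pd b (pd m (g m c))) x) - pd a (pd b (pd c (Ttr g))) x := by
  rw [pdV hg b c]
  have h1 : Differentiable ℝ (fun x => ∑ m, pd b (pd m (g m c)) x) :=
    (ContDiff.sum fun m _ => contDiff_pd (contDiff_pd (hg m c) m) b).differentiable (by simp)
  have h2 : Differentiable ℝ (pd b (pd c (Ttr g))) :=
    diff_pd (contDiff_pd (hTtr hg) c) b
  rw [pd_sub (u := fun x => ∑ m, pd b (pd m (g m c)) x) (v := pd b (pd c (Ttr g))) h1 h2 a,
    pd_sum (fun m => pd b (pd m (g m c)))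
      (fun m => diff_pd (contDiff_pd (hg m c) m) b) a]

omit hg in
lemma hChamEq : Cham g = fun x => ∑ l, pd l (Vv g l) x := rfl

lemma hChamC : ContDiff ℝ (⊤ : ℕ∞) (Cham g) := by
  rw [hChamEq]
  exact ContDiff.sum fun l _ => contDiff_pd (hVv hg l) l

end aux

/-- if `f_kij := (1/2)[∂_k g_ij − (∂^l g_li − ∂_i g_l^l)δ_jk −
(∂^l g_lj − ∂_j g_l^l)δ_ik]` then `∂^k(∂^l f_klj − ∂_j f_kl^l) = (1/2)∂_j C`; in particular
if `g` satisfies the Hamiltonian constraint `C = 0` then `f` satisfies the f-constraint. -/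
theorem f_constraint_from_hamiltonian_constraint
    (g : Fin 3 → Fin 3 → (Fin 3 → ℝ) → ℝ)
    (hg_smooth : ∀ i j, ContDiff ℝ (⊤ : ℕ∞) (g i j))
    (hg_symm : ∀ i j, g i j = g j i)
    (f : Fin 3 → Fin 3 → Fin 3 → (Fin 3 → ℝ) → ℝ)
    (hf : ∀ k i j x, f k i j x =
      (1 / 2) * (pd k (g i j) x
        - ((∑ l, pd l (g l i) x) - pd i (fun y => ∑ l, g l l y) x) * kd j k
        - ((∑ l, pd l (g l j) x) - pd j (fun y => ∑ l, g l l y) x) * kd i k)) :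
    (∀ j x, Fcon f j x = (1 / 2) * pd j (Cham g) x) ∧
    ((∀ x, Cham g x = 0) → ∀ j x, Fcon f j x = 0) := by
  have hg := hg_smooth
  have hfe : ∀ k i j, f k i j =
      fun x => (1/2) * (pd k (g i j) x - Vv g i x * kd j k - Vv g j x * kd i k) := by
    intro k i j; funext x; exact hf k i j x
  -- the main formula
  have main : ∀ j x, Fcon f j x = (1 / 2) * pd j (Cham g) x := by
    intro j x
    -- pd of f
    have hpdf : ∀ k l j, pd l (f k l j) =
        fun x => (1/2) * (pd l (pd k (g l j)) x - pd l (Vv g l) x * kd j k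
          - pd l (Vv g j) x * kd l k) := by
      intro k l j
      rw [hfe k l j]
      exact pd_comb3 l (1/2) (kd j k) (kd l k)
        ((diff_pd (hg l j) k)) ((hVv hg l).differentiable (by simp))
        ((hVv hg j).differentiable (by simp))
    -- the trace part
    have hSk : ∀ k, (fun z => ∑ l, f k l l z) =
        fun z => (1/2) * (pd k (Ttr g) z - 2 * Vv g k z) := by
      intro k
      funext z
      simp only [hfe]
      have e1 : ∑ l, (1/2 : ℝ) * (pd k (g l l) z - Vv g l z * kd l k - Vv g l z * kd l k)
          = (1/2) * ((∑ l, pd k (g l l) z) - (∑ l, Vv g l z * kd l k)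
              - (∑ l, Vv g l z * kd l k)) := by
        rw [← Finset.mul_sum, Finset.sum_sub_distrib, Finset.sum_sub_distrib]
      rw [e1, sum_mul_kd (fun l => Vv g l z) k]
      have e2 : pd k (Ttr g) z = ∑ l, pd k (g l l) z := by
        have : pd k (Ttr g) = fun z => ∑ l, pd k (g l l) z :=
          pd_sum (fun l => g l l) (fun l => (hg l l).differentiable (by simp)) k
        rw [this]
      rw [e2]; ring
    -- the inner function of Fcon
    have hInner : ∀ k,
        (fun y => (∑ l, pd l (f k l j) y) - pd j (fun z => ∑ l, f k l l z) y) =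
        fun y => (1/2) * ((∑ l, pd l (pd k (g l j)) y) - Cham g y * kd j k
          - pd k (Vv g j) y - pd j (pd k (Ttr g)) y + 2 * pd j (Vv g k) y) := by
      intro k
      funext y
      rw [hSk k,
        pd_comb2 j (1/2) (u := pd k (Ttr g)) (v := Vv g k)
          (diff_pd (hTtr hg) k) ((hVv hg k).differentiable (by simp))]
      simp only [hpdf]
      rw [sum_half_comb (1/2) (fun l => pd l (pd k (g l j)) y)
        (fun l => pd l (Vv g l) y) (fun l => pd l (Vv g j) y) (kd j k) k]
      have hCy : Cham g y = ∑ l, pd l (Vv g l) y := congrFun hChamEq y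
      rw [hCy]; ring
    -- expand Fcon
    have step1 : Fcon f j x = ∑ k, (1/2) *
        ((∑ l, pd k (pd l (pd k (g l j))) x) - pd k (Cham g) x * kd j k
          - pd k (pd k (Vv g j)) x - pd k (pd j (pd k (Ttr g))) x
          + 2 * pd k (pd j (Vv g k)) x) := by
      unfold Fcon
      refine Finset.sum_congr rfl fun k _ => ?_
      rw [hInner k]
      have hc5 := pd_comb5 k (1/2) (kd j k)
        (u1 := fun y => ∑ l, pd l (pd k (g l j)) y) (u2 := Cham g)
        (u3 := pd k (Vv g j)) (u4 := pd j (pd k (Ttr g))) (u5 := pd j (Vv g k))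
        ((ContDiff.sum fun l _ => contDiff_pd (contDiff_pd (hg l j) k) l).differentiable (by simp))
        ((hChamC hg).differentiable (by simp))
        (diff_pd (hVv hg j) k)
        (diff_pd (contDiff_pd (hTtr hg) k) j)
        (diff_pd (hVv hg k) j)
      rw [hc5,
        pd_sum (fun l => pd l (pd k (g l j)))
          (fun l => diff_pd (contDiff_pd (hg l j) k) l) k]
    -- simplify each summand using commutation of derivatives
    have step2 : ∀ k, (1/2 : ℝ) *
        ((∑ l, pd k (pd l (pd k (g l j))) x) - pd k (Cham g) x * kd j k
          - pd k (pd k (Vv g j)) x - pd k (pd j (pd k (Ttr g))) x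
          + 2 * pd k (pd j (Vv g k)) x)
        = (1/2) * (2 * pd j (pd k (Vv g k)) x - pd k (Cham g) x * kd j k) := by
      intro k
      have hcomm1 : ∀ l : Fin 3, pd l (pd k (g l j)) = pd k (pd l (g l j)) :=
        fun l => pd_comm (hg l j) l k
      have hcomm2 : pd j (pd k (Ttr g)) = pd k (pd j (Ttr g)) :=
        pd_comm (hTtr hg) j k
      have hcomm3 : pd k (pd j (Vv g k)) = pd j (pd k (Vv g k)) :=
        pd_comm (hVv hg k) k j
      simp only [hcomm1, hcomm2, hcomm3]
      rw [pd_pd_V hg k k j]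
      ring
    rw [step1]
    rw [Finset.sum_congr rfl fun k _ => step2 k]
    -- final summation
    have h2 : ∑ k, pd j (pd k (Vv g k)) x = pd j (Cham g) x := by
      have : pd j (Cham g) = fun x => ∑ k, pd j (pd k (Vv g k)) x := by
        rw [hChamEq (g := g),
          pd_sum (fun k => pd k (Vv g k)) (fun k => diff_pd (hVv hg k) k) j]
      rw [this]
    have h3 : ∑ k, pd k (Cham g) x * kd j k = pd j (Cham g) x :=
      sum_mul_kd' (fun k => pd k (Cham g) x) j
    rw [← Finset.mul_sum, Finset.sum_sub_distrib, h3, ← Finset.mul_sum, h2]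
    ring
  refine ⟨main, fun hC j x => ?_⟩
  rw [main j x]
  have : Cham g = fun _ => (0:ℝ) := funext hC
  rw [this]
  simp [pd]
end

section
/- Suppose g_ij, K_ij, f_kij are smooth time-dependent tensor fields on ℝ³ (all symmetric in i,j) satisfying ∂_t g_ij = −2K_ij + 2∂_(i β_j) and ∂_t f_kij = −∂_k K_ij + L_kij with β_i smooth and L_kij := ∂_k ∂_(i β_j) − ∂^l ∂_[l β_i] δ_jk − ∂^l ∂_[l β_j] δ_ik, and suppose the momentum constraint C_j := ∂^l K_lj − ∂_j K_l^l = 0 holds for all time. Then the quantity f_kij − (1/2)[∂_k g_ij − (∂^l g_li − ∂_i g_l^l)δ_jk − (∂^l g_lj − ∂_j g_l^l)δ_ik] is independent of time. -/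
open scoped BigOperators

section helpers

variable {u : ℝ → (Fin 3 → ℝ) → ℝ}

lemma smooth_sliceX (hu : SmoothT u) (t : ℝ) : ContDiff ℝ (⊤ : ℕ∞) (u t) :=
  hu.comp (contDiff_const.prodMk contDiff_id)

lemma smooth_sliceT (hu : SmoothT u) (x : Fin 3 → ℝ) : ContDiff ℝ (⊤ : ℕ∞) (fun s => u s x) :=
  hu.comp (contDiff_id.prodMk contDiff_const)

lemma pd_smooth {v : (Fin 3 → ℝ) → ℝ} (hv : ContDiff ℝ (⊤ : ℕ∞) v) (k : Fin 3) :
    ContDiff ℝ (⊤ : ℕ∞) (pd k v) :=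
  (hv.fderiv_right (by simp)).clm_apply contDiff_const

lemma pd_add_s6 {a b : (Fin 3 → ℝ) → ℝ} {x : Fin 3 → ℝ} (ha : DifferentiableAt ℝ a x)
    (hb : DifferentiableAt ℝ b x) (k : Fin 3) :
    pd k (fun y => a y + b y) x = pd k a x + pd k b x := by
  simp [pd, fderiv_fun_add ha hb]

lemma pd_const_mul_s6 {a : (Fin 3 → ℝ) → ℝ} {x : Fin 3 → ℝ} (ha : DifferentiableAt ℝ a x)
    (c : ℝ) (k : Fin 3) :
    pd k (fun y => c * a y) x = c * pd k a x := by
  simp [pd, fderiv_const_mul ha c]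

lemma pd_sum_s6 {v : Fin 3 → (Fin 3 → ℝ) → ℝ} {x : Fin 3 → ℝ}
    (hv : ∀ l, DifferentiableAt ℝ (v l) x) (c : Fin 3) :
    pd c (fun y => ∑ l, v l y) x = ∑ l, pd c (v l) x := by
  simp [pd, fderiv_fun_sum (fun l _ => hv l)]

lemma pd_comm_s6 {v : (Fin 3 → ℝ) → ℝ} (hv : ContDiff ℝ (⊤ : ℕ∞) v) (a b : Fin 3) (x : Fin 3 → ℝ) :
    pd a (pd b v) x = pd b (pd a v) x := by
  have hD : ContDiff ℝ (⊤ : ℕ∞) (fderiv ℝ v) := hv.fderiv_right (by simp)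
  have hD2 : HasFDerivAt (fderiv ℝ v) (fderiv ℝ (fderiv ℝ v) x) x :=
    (hD.differentiable (by simp) x).hasFDerivAt
  have key : ∀ c d : Fin 3, pd c (pd d v) x
      = fderiv ℝ (fderiv ℝ v) x (Pi.single c 1) (Pi.single d 1) := by
    intro c d
    have h4 : HasFDerivAt (fun y => fderiv ℝ v y (Pi.single d 1))
        ((fderiv ℝ v x).comp (0 : (Fin 3 → ℝ) →L[ℝ] (Fin 3 → ℝ))
          + (fderiv ℝ (fderiv ℝ v) x).flip (Pi.single d 1)) x :=
      hD2.clm_apply (hasFDerivAt_const (Pi.single d 1) x)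
    show fderiv ℝ (fun y => fderiv ℝ v y (Pi.single d 1)) x (Pi.single c 1) = _
    rw [h4.fderiv]; simp
  rw [key, key]
  exact second_derivative_symmetric (fun y => (hv.differentiable (by simp) y).hasFDerivAt) hD2 _ _

lemma hasDerivAt_pd_slice (hu : SmoothT u) (k : Fin 3) (t : ℝ) (x : Fin 3 → ℝ) :
    HasDerivAt (fun s => pd k (u s) x) (pd k (fun y => dt u t y) x) t := by
  set U : ℝ × (Fin 3 → ℝ) → ℝ := fun p => u p.1 p.2 with hUdef
  have hUd : Differentiable ℝ U := hu.differentiable (by simp)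
  have hD : ContDiff ℝ (⊤ : ℕ∞) (fderiv ℝ U) := hu.fderiv_right (by simp)
  set D2 := fderiv ℝ (fderiv ℝ U) (t, x) with hD2def
  have hD2 : HasFDerivAt (fderiv ℝ U) D2 (t, x) := (hD.differentiable (by simp) _).hasFDerivAt
  -- the spatial derivative of a time-slice, in terms of U
  have hslice : ∀ (s : ℝ) (y : Fin 3 → ℝ) (w : Fin 3 → ℝ),
      fderiv ℝ (u s) y w = fderiv ℝ U (s, y) ((0 : ℝ), w) := by
    intro s y w
    have h1 : HasFDerivAt (fun z : Fin 3 → ℝ => ((s, z) : ℝ × (Fin 3 → ℝ)))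
        ((0 : (Fin 3 → ℝ) →L[ℝ] ℝ).prod (ContinuousLinearMap.id ℝ (Fin 3 → ℝ))) y :=
      (hasFDerivAt_const s y).prodMk (hasFDerivAt_id y)
    have h2 : HasFDerivAt (u s)
        ((fderiv ℝ U (s, y)).comp
          ((0 : (Fin 3 → ℝ) →L[ℝ] ℝ).prod (ContinuousLinearMap.id ℝ (Fin 3 → ℝ)))) y :=
      (hUd (s, y)).hasFDerivAt.comp y h1
    rw [h2.fderiv]; rfl
  have hdt : ∀ (s : ℝ) (y : Fin 3 → ℝ),
      dt u s y = fderiv ℝ U (s, y) ((1 : ℝ), (0 : Fin 3 → ℝ)) := by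
    intro s y
    have h1 : HasDerivAt (fun r : ℝ => ((r, y) : ℝ × (Fin 3 → ℝ)))
        ((1 : ℝ), (0 : Fin 3 → ℝ)) s := (hasDerivAt_id s).prodMk (hasDerivAt_const s y)
    have h2 : HasDerivAt (fun r => u r y) (fderiv ℝ U (s, y) ((1 : ℝ), (0 : Fin 3 → ℝ))) s :=
      by have := (hUd (s, y)).hasFDerivAt.comp_hasDerivAt s h1; exact this
    exact h2.deriv.symm ▸ rfl
  have h3 : HasDerivAt (fun s => fderiv ℝ U (s, x) ((0 : ℝ), (Pi.single k 1 : Fin 3 → ℝ)))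
      (D2 ((1 : ℝ), (0 : Fin 3 → ℝ)) ((0 : ℝ), (Pi.single k 1 : Fin 3 → ℝ))) t := by
    have h1 : HasDerivAt (fun r : ℝ => ((r, x) : ℝ × (Fin 3 → ℝ)))
        ((1 : ℝ), (0 : Fin 3 → ℝ)) t := (hasDerivAt_id t).prodMk (hasDerivAt_const t x)
    have h4 : HasFDerivAt (fun p => fderiv ℝ U p ((0 : ℝ), (Pi.single k 1 : Fin 3 → ℝ)))
        ((fderiv ℝ U (t, x)).comp (0 : (ℝ × (Fin 3 → ℝ)) →L[ℝ] (ℝ × (Fin 3 → ℝ)))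
          + D2.flip ((0 : ℝ), (Pi.single k 1 : Fin 3 → ℝ))) (t, x) :=
      hD2.clm_apply (hasFDerivAt_const _ (t, x))
    have h5 := h4.comp_hasDerivAt t h1
    convert h5 using 1
    · rfl
    · rfl
    · rfl
    simp
  have h5 : pd k (fun y => dt u t y) x
      = D2 ((0 : ℝ), (Pi.single k 1 : Fin 3 → ℝ)) ((1 : ℝ), (0 : Fin 3 → ℝ)) := by
    have hfe : (fun y => dt u t y)
        = fun y => fderiv ℝ U (t, y) ((1 : ℝ), (0 : Fin 3 → ℝ)) := funext (hdt t)
    have h1 : HasFDerivAt (fun z : Fin 3 → ℝ => ((t, z) : ℝ × (Fin 3 → ℝ)))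
        ((0 : (Fin 3 → ℝ) →L[ℝ] ℝ).prod (ContinuousLinearMap.id ℝ (Fin 3 → ℝ))) x :=
      (hasFDerivAt_const t x).prodMk (hasFDerivAt_id x)
    have h4 : HasFDerivAt (fun p => fderiv ℝ U p ((1 : ℝ), (0 : Fin 3 → ℝ)))
        ((fderiv ℝ U (t, x)).comp (0 : (ℝ × (Fin 3 → ℝ)) →L[ℝ] (ℝ × (Fin 3 → ℝ)))
          + D2.flip ((1 : ℝ), (0 : Fin 3 → ℝ))) (t, x) :=
      hD2.clm_apply (hasFDerivAt_const _ (t, x))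
    have h2 : HasFDerivAt (fun z : Fin 3 → ℝ => fderiv ℝ U (t, z) ((1 : ℝ), (0 : Fin 3 → ℝ)))
        (((fderiv ℝ U (t, x)).comp (0 : (ℝ × (Fin 3 → ℝ)) →L[ℝ] (ℝ × (Fin 3 → ℝ)))
            + D2.flip ((1 : ℝ), (0 : Fin 3 → ℝ))).comp
          ((0 : (Fin 3 → ℝ) →L[ℝ] ℝ).prod (ContinuousLinearMap.id ℝ (Fin 3 → ℝ)))) x :=
      h4.comp x h1
    show fderiv ℝ (fun y => dt u t y) x (Pi.single k 1) = _
    rw [hfe, h2.fderiv]; simp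
  have hsym : D2 ((1 : ℝ), (0 : Fin 3 → ℝ)) ((0 : ℝ), (Pi.single k 1 : Fin 3 → ℝ))
      = D2 ((0 : ℝ), (Pi.single k 1 : Fin 3 → ℝ)) ((1 : ℝ), (0 : Fin 3 → ℝ)) :=
    second_derivative_symmetric (fun y => (hUd y).hasFDerivAt) hD2 _ _
  have hfun : (fun s => pd k (u s) x)
      = fun s => fderiv ℝ U (s, x) ((0 : ℝ), (Pi.single k 1 : Fin 3 → ℝ)) := by
    funext s; exact hslice s x _
  rw [show (fun s => pd k (u s) x) = fun s => fderiv ℝ U (s, x)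
        ((0 : ℝ), (Pi.single k 1 : Fin 3 → ℝ)) from hfun, h5, ← hsym]
  exact h3

end helpers

/-- if `∂_t g_ij = −2K_ij + 2∂_(i β_j)`, `∂_t f_kij = −∂_k K_ij + L_kij`,
and the momentum constraint `C_j = 0` holds for all time, then
`f_kij − (1/2)[∂_k g_ij − (∂^l g_li − ∂_i g_l^l)δ_jk − (∂^l g_lj − ∂_j g_l^l)δ_ik]`
is independent of time. -/
theorem deff_quantity_time_independent
    (g K : Fin 3 → Fin 3 → ℝ → (Fin 3 → ℝ) → ℝ)
    (f : Fin 3 → Fin 3 → Fin 3 → ℝ → (Fin 3 → ℝ) → ℝ)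
    (β : Fin 3 → ℝ → (Fin 3 → ℝ) → ℝ)
    (hg_smooth : ∀ i j, SmoothT (g i j)) (hK_smooth : ∀ i j, SmoothT (K i j))
    (hf_smooth : ∀ k i j, SmoothT (f k i j)) (hβ_smooth : ∀ i, SmoothT (β i))
    (hg_symm : ∀ i j, g i j = g j i) (hK_symm : ∀ i j, K i j = K j i)
    (hf_symm : ∀ k i j, f k i j = f k j i)
    (hG : ∀ i j t x, dt (g i j) t x =
      -2 * K i j t x + (pd i (β j t) x + pd j (β i t) x))
    (hFev : ∀ k i j t x, dt (f k i j) t x = -pd k (K i j t) x + Lsh β k i j t x)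
    (hC : ∀ j t x, Cmom K j t x = 0) :
    ∀ k i j x t t',
      f k i j t x - (1 / 2) * (pd k (g i j t) x
        - ((∑ l, pd l (g l i t) x) - pd i (fun y => ∑ l, g l l t y) x) * kd j k
        - ((∑ l, pd l (g l j t) x) - pd j (fun y => ∑ l, g l l t y) x) * kd i k)
      =
      f k i j t' x - (1 / 2) * (pd k (g i j t') x
        - ((∑ l, pd l (g l i t') x) - pd i (fun y => ∑ l, g l l t' y) x) * kd j k
        - ((∑ l, pd l (g l j t') x) - pd j (fun y => ∑ l, g l l t' y) x) * kd i k) := by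
  intro k i j x t t'
  set F : ℝ → ℝ := fun s => f k i j s x - (1 / 2) * (pd k (g i j s) x
    - ((∑ l, pd l (g l i s) x) - pd i (fun y => ∑ l, g l l s y) x) * kd j k
    - ((∑ l, pd l (g l j s) x) - pd j (fun y => ∑ l, g l l s y) x) * kd i k) with hFdef
  have key : ∀ s : ℝ, HasDerivAt F 0 s := by
    intro s
    -- pd applied to the time derivative of g, computed via the evolution equation
    have keyG : ∀ a b c : Fin 3, pd c (fun y => dt (g a b) s y) x =
        -2 * pd c (K a b s) x + (pd c (pd a (β b s)) x + pd c (pd b (β a s)) x) := by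
      intro a b c
      have h1 : (fun y => dt (g a b) s y)
          = fun y => -2 * K a b s y + (pd a (β b s) y + pd b (β a s) y) :=
        funext fun y => hG a b s y
      rw [h1]
      have hKd : DifferentiableAt ℝ (K a b s) x :=
        ((smooth_sliceX (hK_smooth a b) s).differentiable (by simp)) x
      have hb1 : DifferentiableAt ℝ (pd a (β b s)) x :=
        ((pd_smooth (smooth_sliceX (hβ_smooth b) s) a).differentiable (by simp)) x
      have hb2 : DifferentiableAt ℝ (pd b (β a s)) x :=
        ((pd_smooth (smooth_sliceX (hβ_smooth a) s) b).differentiable (by simp)) x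
      rw [pd_add_s6 (b := fun y => pd a (β b s) y + pd b (β a s) y) (hKd.const_mul (-2)) (hb1.add hb2) c, pd_const_mul_s6 hKd (-2) c,
        pd_add_s6 hb1 hb2 c]
    -- individual HasDerivAt facts
    have hA : HasDerivAt (fun r => f k i j r x) (dt (f k i j) s x) s :=
      ((smooth_sliceT (hf_smooth k i j) x).differentiable (by simp) s).hasDerivAt
    have hB : HasDerivAt (fun r => pd k (g i j r) x)
        (pd k (fun y => dt (g i j) s y) x) s :=
      hasDerivAt_pd_slice (hg_smooth i j) k s x
    have hC1 : HasDerivAt (fun r => ∑ l, pd l (g l i r) x)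
        (∑ l, pd l (fun y => dt (g l i) s y) x) s :=
      HasDerivAt.fun_sum fun l _ => hasDerivAt_pd_slice (hg_smooth l i) l s x
    have hC1' : HasDerivAt (fun r => ∑ l, pd l (g l j r) x)
        (∑ l, pd l (fun y => dt (g l j) s y) x) s :=
      HasDerivAt.fun_sum fun l _ => hasDerivAt_pd_slice (hg_smooth l j) l s x
    have hrw : ∀ (c : Fin 3) (r : ℝ), pd c (fun y => ∑ l, g l l r y) x
        = ∑ l, pd c (g l l r) x := fun c r =>
      pd_sum_s6 (fun l => ((smooth_sliceX (hg_smooth l l) r).differentiable (by simp)) x) c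
    have hC2 : HasDerivAt (fun r => pd i (fun y => ∑ l, g l l r y) x)
        (∑ l, pd i (fun y => dt (g l l) s y) x) s := by
      rw [show (fun r => pd i (fun y => ∑ l, g l l r y) x)
          = fun r => ∑ l, pd i (g l l r) x from funext (hrw i)]
      exact HasDerivAt.fun_sum fun l _ => hasDerivAt_pd_slice (hg_smooth l l) i s x
    have hC2' : HasDerivAt (fun r => pd j (fun y => ∑ l, g l l r y) x)
        (∑ l, pd j (fun y => dt (g l l) s y) x) s := by
      rw [show (fun r => pd j (fun y => ∑ l, g l l r y) x)
          = fun r => ∑ l, pd j (g l l r) x from funext (hrw j)]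
      exact HasDerivAt.fun_sum fun l _ => hasDerivAt_pd_slice (hg_smooth l l) j s x
    have hBig : HasDerivAt F
        (dt (f k i j) s x - (1 / 2) * (pd k (fun y => dt (g i j) s y) x
          - ((∑ l, pd l (fun y => dt (g l i) s y) x)
              - (∑ l, pd i (fun y => dt (g l l) s y) x)) * kd j k
          - ((∑ l, pd l (fun y => dt (g l j) s y) x)
              - (∑ l, pd j (fun y => dt (g l l) s y) x)) * kd i k)) s :=
      hA.sub (((hB.sub ((hC1.sub hC2).mul_const (kd j k))).sub
        ((hC1'.sub hC2').mul_const (kd i k))).const_mul (1 / 2))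
    -- now show the derivative value is zero
    have hcomm : ∀ a b c : Fin 3, pd a (pd b (β c s)) x = pd b (pd a (β c s)) x :=
      fun a b c => pd_comm_s6 (smooth_sliceX (hβ_smooth c) s) a b x
    have hCi : (∑ l, pd l (K l i s) x) - (∑ l, pd i (K l l s) x) = 0 := by
      have h := hC i s x
      rw [Cmom] at h
      rwa [pd_sum_s6 (fun l => ((smooth_sliceX (hK_smooth l l) s).differentiable (by simp)) x) i]
        at h
    have hCj : (∑ l, pd l (K l j s) x) - (∑ l, pd j (K l l s) x) = 0 := by
      have h := hC j s x
      rw [Cmom] at h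
      rwa [pd_sum_s6 (fun l => ((smooth_sliceX (hK_smooth l l) s).differentiable (by simp)) x) j]
        at h
    have hval : (dt (f k i j) s x - (1 / 2) * (pd k (fun y => dt (g i j) s y) x
          - ((∑ l, pd l (fun y => dt (g l i) s y) x)
              - (∑ l, pd i (fun y => dt (g l l) s y) x)) * kd j k
          - ((∑ l, pd l (fun y => dt (g l j) s y) x)
              - (∑ l, pd j (fun y => dt (g l l) s y) x)) * kd i k)) = 0 := by
      rw [hFev]
      simp only [keyG, Lsh]
      simp only [Fin.sum_univ_three] at hCi hCj ⊢
      rw [hcomm i 0 0, hcomm i 1 1, hcomm i 2 2, hcomm j 0 0, hcomm j 1 1, hcomm j 2 2]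
      linear_combination (-(kd j k)) * hCi - (kd i k) * hCj
    rw [hval] at hBig
    exact hBig
  exact is_const_of_deriv_eq_zero (fun r => (key r).differentiableAt)
    (fun r => (key r).deriv) t t'
end

section
/- For every unit vector n^i in ℝ³, the symmetric linear boundary operator A_n on the 30-dimensional space V has exactly six positive eigenvalues, eighteen zero eigenvalues, and six negative eigenvalues, counted with multiplicity. -/
open scoped BigOperators Classical

/-- The 36-dimensional ambient space of triples `(g_ij, K_ij, f_kij)` of constant
tensors (no symmetry imposed). -/
abbrev W : Type :=
  (Fin 3 → Fin 3 → ℝ) × (Fin 3 → Fin 3 → ℝ) × (Fin 3 → Fin 3 → Fin 3 → ℝ)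

/-- The 30-dimensional subspace `V` of `W` consisting of triples with `g`, `K`, and `f`
symmetric in the indices `i` and `j`. -/
def Vsub : Submodule ℝ W where
  carrier := {v | (∀ i j, v.1 i j = v.1 j i) ∧ (∀ i j, v.2.1 i j = v.2.1 j i) ∧
    (∀ k i j, v.2.2 k i j = v.2.2 k j i)}
  add_mem' := by
    rintro a b ⟨a1, a2, a3⟩ ⟨b1, b2, b3⟩
    refine ⟨fun i j => ?_, fun i j => ?_, fun k i j => ?_⟩ <;>
      simp only [Prod.fst_add, Prod.snd_add, Pi.add_apply] <;>
      [rw [a1 i j, b1 i j]; rw [a2 i j, b2 i j]; rw [a3 k i j, b3 k i j]]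
  zero_mem' := ⟨fun _ _ => rfl, fun _ _ => rfl, fun _ _ _ => rfl⟩
  smul_mem' := by
    rintro c a ⟨a1, a2, a3⟩
    refine ⟨fun i j => ?_, fun i j => ?_, fun k i j => ?_⟩ <;>
      simp only [Prod.smul_fst, Prod.smul_snd, Pi.smul_apply] <;>
      [rw [a1 i j]; rw [a2 i j]; rw [a3 k i j]]

/-- The boundary operator `A_n`: `(g,K,f) ↦ (0, n^k f_kij, n_k K_ij)`. -/
def bop (n : Fin 3 → ℝ) (v : W) : W :=
  (0, fun i j => ∑ k, n k * v.2.2 k i j, fun k i j => n k * v.2.1 i j)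

/-! Since `g`, `K` and `f` are symmetric in `(i, j)`, an element of `V` is a function on the six
unordered index pairs `{i, j}` with values `(g_ij, K_ij, f_·ij)` in the five-dimensional fibre
`ℝ × ℝ × ℝ³`, on each of which `A_n` acts by `(a, b, w) ↦ (0, n · w, b n)`. Completing `n` to
an orthonormal frame `(n, e₁, e₂)`, this fibre operator has the eigenvectors `(0, 1, ±n)` with
eigenvalues `±1`, and its kernel is spanned by `(1, 0, 0)`, `(0, 0, e₁)`, `(0, 0, e₂)`. Repeating
this over the six index pairs gives `6`, `18` and `6` eigenvalues. -/

open Matrix Module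

namespace Matrix

variable {ι : Type*} [Fintype ι] [DecidableEq ι]

lemma row_dotProduct_row_of_mem_orthogonalGroup {O : Matrix ι ι ℝ}
    (hO : O ∈ orthogonalGroup ι ℝ) (i j : ι) : O i ⬝ᵥ O j = if i = j then 1 else 0 := by
  have h := congrFun (congrFun ((mem_orthogonalGroup_iff ι ℝ).mp hO) i) j
  rwa [mul_apply', one_apply] at h

lemma exists_mem_orthogonalGroup_row_eq (i₀ : ι) {n : ι → ℝ} (hn : ∑ i, n i ^ 2 = 1) :
    ∃ O ∈ orthogonalGroup ι ℝ, O i₀ = n := by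
  have hunit : Orthonormal ℝ (({i₀} : Set ι).domRestrict fun _ => WithLp.toLp 2 n) := by
    refine ⟨fun _ => ?_, fun i j hij => absurd (Subtype.ext (i.2.trans j.2.symm)) hij⟩
    simp [Set.domRestrict, EuclideanSpace.norm_eq, hn]
  obtain ⟨b, hb⟩ := hunit.exists_orthonormalBasis_extension_of_card_eq
    (finrank_euclideanSpace (ι := ι) (𝕜 := ℝ))
  refine ⟨Matrix.of fun i k => b i k, (mem_orthogonalGroup_iff ι ℝ).mpr ?_, ?_⟩
  · ext i j
    simpa [mul_apply, one_apply, PiLp.inner_apply, mul_comm] using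
      orthonormal_iff_ite.mp b.orthonormal i j
  · ext k
    simp [hb i₀ rfl]

end Matrix

lemma Finset.card_filter_snd_comp_equiv {α η κ : Type*} [Fintype α] [Fintype η] [Fintype κ]
    (σ : α ≃ Σ _ : η, κ) (p : κ → Prop) [DecidablePred p] :
    (univ.filter fun a => p (σ a).2).card = Fintype.card η * (univ.filter p).card := by
  simp only [card_filter]
  rw [σ.sum_comp (fun j => if p j.2 then 1 else 0), Fintype.sum_sigma]
  simp

-- The components `(g_ij, K_ij, (f_kij)_k)` of an element of `V` at an index pair `{i, j}`.
abbrev Fibre : Type := ℝ × ℝ × (Fin 3 → ℝ)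

def fibreOp (n : Fin 3 → ℝ) : Fibre →ₗ[ℝ] Fibre where
  toFun x := (0, n ⬝ᵥ x.2.2, x.2.1 • n)
  map_add' x y := by simp [dotProduct_add, add_smul]
  map_smul' c x := by simp [dotProduct_smul, smul_smul]

def Vsub.toFibres (v : Vsub) : Sym2 (Fin 3) → Fibre :=
  Sym2.lift ⟨fun i j => (v.1.1 i j, v.1.2.1 i j, fun k => v.1.2.2 k i j), fun i j => by
    obtain ⟨hg, hK, hf⟩ := v.2
    simp only [hg i j, hK i j, hf _ i j]⟩

def Vsub.ofFibres (c : Sym2 (Fin 3) → Fibre) : Vsub :=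
  ⟨(fun i j => (c s(i, j)).1, fun i j => (c s(i, j)).2.1, fun k i j => (c s(i, j)).2.2 k),
    fun _ _ => congrArg (fun z => (c z).1) Sym2.eq_swap,
    fun _ _ => congrArg (fun z => (c z).2.1) Sym2.eq_swap,
    fun k _ _ => congrArg (fun z => (c z).2.2 k) Sym2.eq_swap⟩

def Vsub.fibresEquiv : Vsub ≃ₗ[ℝ] (Sym2 (Fin 3) → Fibre) where
  toFun := Vsub.toFibres
  invFun := Vsub.ofFibres
  map_add' v w := by funext z; induction z using Sym2.ind; rfl
  map_smul' r v := by funext z; induction z using Sym2.ind; rfl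
  left_inv v := rfl
  right_inv c := by funext z; induction z using Sym2.ind; rfl

lemma bop_fibresEquiv_symm (n : Fin 3 → ℝ) (c : Sym2 (Fin 3) → Fibre) :
    bop n (Vsub.fibresEquiv.symm c : W) = Vsub.fibresEquiv.symm (fun z => fibreOp n (c z)) := by
  refine Prod.ext rfl (Prod.ext rfl ?_)
  funext k i j
  exact mul_comm _ _

def fibreEigenvalue : Fin 5 → ℝ := ![0, 1, -1, 0, 0]

lemma filter_fibreEigenvalue_pos : Finset.univ.filter (0 < fibreEigenvalue ·) = {1} := by
  ext s
  rw [Finset.mem_filter]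
  fin_cases s <;> simp [fibreEigenvalue]

lemma filter_fibreEigenvalue_eq_zero :
    Finset.univ.filter (fibreEigenvalue · = 0) = {0, 3, 4} := by
  ext s
  rw [Finset.mem_filter]
  fin_cases s <;> simp [fibreEigenvalue]

lemma filter_fibreEigenvalue_neg : Finset.univ.filter (fibreEigenvalue · < 0) = {2} := by
  ext s
  rw [Finset.mem_filter]
  fin_cases s <;> simp [fibreEigenvalue]

def fibreEigenvector (O : Matrix (Fin 3) (Fin 3) ℝ) : Fin 5 → Fibre :=
  ![(1, 0, 0), (0, 1, O 0), (0, 1, -O 0), (0, 0, O 1), (0, 0, O 2)]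

section

variable {O : Matrix (Fin 3) (Fin 3) ℝ}

lemma fibreOp_fibreEigenvector (hO : O ∈ orthogonalGroup (Fin 3) ℝ) (s : Fin 5) :
    fibreOp (O 0) (fibreEigenvector O s) = fibreEigenvalue s • fibreEigenvector O s := by
  have hrow := row_dotProduct_row_of_mem_orthogonalGroup hO
  fin_cases s <;> simp [fibreOp, fibreEigenvector, fibreEigenvalue, hrow]

lemma linearIndependent_fibreEigenvector (hO : O ∈ orthogonalGroup (Fin 3) ℝ) :
    LinearIndependent ℝ (fibreEigenvector O) := by
  have hrow := row_dotProduct_row_of_mem_orthogonalGroup hO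
  rw [Fintype.linearIndependent_iff]
  intro c hc
  simp only [Fin.sum_univ_five, fibreEigenvector] at hc
  have hg : c 0 = 0 := by simpa using congrArg (·.1) hc
  have hK : c 1 + c 2 = 0 := by simpa using congrArg (·.2.1) hc
  have hf : (c 1 - c 2) • O 0 + c 3 • O 1 + c 4 • O 2 = 0 := by
    simpa [sub_smul, ← sub_eq_add_neg] using congrArg (·.2.2) hc
  have hf₀ : c 1 - c 2 = 0 := by
    simpa [add_dotProduct, smul_dotProduct, hrow] using congrArg (· ⬝ᵥ O 0) hf
  have hf₁ : c 3 = 0 := by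
    simpa [add_dotProduct, smul_dotProduct, hrow] using congrArg (· ⬝ᵥ O 1) hf
  have hf₂ : c 4 = 0 := by
    simpa [add_dotProduct, smul_dotProduct, hrow] using congrArg (· ⬝ᵥ O 2) hf
  obtain ⟨hc₁, hc₂⟩ : c 1 = 0 ∧ c 2 = 0 := ⟨by linarith, by linarith⟩
  intro s
  fin_cases s <;> assumption

noncomputable def fibreEigenbasis (hO : O ∈ orthogonalGroup (Fin 3) ℝ) : Basis (Fin 5) ℝ Fibre :=
  basisOfLinearIndependentOfCardEqFinrank (linearIndependent_fibreEigenvector hO) (by simp)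

noncomputable def Vsub.eigenbasis (hO : O ∈ orthogonalGroup (Fin 3) ℝ) :
    Basis (Σ _ : Sym2 (Fin 3), Fin 5) ℝ Vsub :=
  (Pi.basis fun _ => fibreEigenbasis hO).map Vsub.fibresEquiv.symm

lemma bop_eigenbasis (hO : O ∈ orthogonalGroup (Fin 3) ℝ) (j : Σ _ : Sym2 (Fin 3), Fin 5) :
    bop (O 0) (Vsub.eigenbasis hO j : W) = fibreEigenvalue j.2 • (Vsub.eigenbasis hO j : W) := by
  have hsingle : (fun z => fibreOp (O 0) (Pi.single (M := fun _ => Fibre) j.1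
      (fibreEigenvector O j.2) z)) =
      fibreEigenvalue j.2 • Pi.single j.1 (fibreEigenvector O j.2) := by
    rw [← Pi.single_smul', ← fibreOp_fibreEigenvector hO]
    funext z
    exact Pi.apply_single (fun _ => fibreOp (O 0)) (fun _ => map_zero _) _ _ z
  simp only [Vsub.eigenbasis, Basis.map_apply, Pi.basis_apply, fibreEigenbasis,
    coe_basisOfLinearIndependentOfCardEqFinrank, bop_fibresEquiv_symm, hsingle, map_smul,
    Submodule.coe_smul]

end

/-- for every unit vector `n`, the symmetric boundary operator `A_n` on the
30-dimensional space `V`, diagonalized in a basis of eigenvectors, has exactly six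
positive, eighteen zero, and six negative eigenvalues, counted with multiplicity. -/
theorem bop_eigenvalue_counts
    (n : Fin 3 → ℝ) (hn : ∑ i, n i ^ 2 = 1) :
    ∃ (b : Module.Basis (Fin 30) ℝ Vsub) (μ : Fin 30 → ℝ),
      (∀ i, bop n (b i : W) = μ i • (b i : W)) ∧
      (Finset.univ.filter fun i => 0 < μ i).card = 6 ∧
      (Finset.univ.filter fun i => μ i = 0).card = 18 ∧
      (Finset.univ.filter fun i => μ i < 0).card = 6 := by
  obtain ⟨O, hO, rfl⟩ := exists_mem_orthogonalGroup_row_eq 0 hn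
  let σ : Fin 30 ≃ Σ _ : Sym2 (Fin 3), Fin 5 :=
    (Fintype.equivFinOfCardEq (by simp [Sym2.card, Nat.choose])).symm
  refine ⟨(Vsub.eigenbasis hO).reindex σ.symm, fun i => fibreEigenvalue (σ i).2,
    fun i => by simpa using bop_eigenbasis hO (σ i), ?_, ?_, ?_⟩
  · rw [Finset.card_filter_snd_comp_equiv σ (0 < fibreEigenvalue ·), filter_fibreEigenvalue_pos]
    simp [Sym2.card, Nat.choose]
  · rw [Finset.card_filter_snd_comp_equiv σ (fibreEigenvalue · = 0),
      filter_fibreEigenvalue_eq_zero]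
    simp [Sym2.card, Nat.choose]
  · rw [Finset.card_filter_snd_comp_equiv σ (fibreEigenvalue · < 0), filter_fibreEigenvalue_neg]
    simp [Sym2.card, Nat.choose]
end
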